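/- arXiv:2511.19015 — 10 statements merged into one kernel-verified Lean document; each statement's English description precedes it below -/
import Mathlib

section
/- Let b > 0 and a, a' ∈ ℝ. Then for every Borel measurable set S ⊆ ℝ, Lap(a, b)(S) ≤ exp(|a − a'|/b) · Lap(a', b)(S). -/
/-
By the triangle inequality `-|x - a| ≤ |a - a'| - |x - a'|`, the density of `Lap(a, b)` is
pointwise at most `exp(|a - a'|/b)` times that of `Lap(a', b)`; integrating this bound over any
set gives the claim.
-/

open MeasureTheory

/-- `laplace a b` is the Laplace distribution on `ℝ` centered at `a` with scale `b`,
given by the density `x ↦ (1/(2b)) · exp(−|x−a|/b)` with respect to Lebesgue measure. -/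
noncomputable def laplace (a b : ℝ) : Measure ℝ :=
  volume.withDensity fun x => ENNReal.ofReal ((1 / (2 * b)) * Real.exp (-|x - a| / b))

theorem laplace_density_le_exp_mul {b : ℝ} (hb : 0 ≤ b) (a a' x : ℝ) :
    1 / (2 * b) * Real.exp (-|x - a| / b) ≤
      Real.exp (|a - a'| / b) * (1 / (2 * b) * Real.exp (-|x - a'| / b)) := by
  rw [mul_left_comm, ← Real.exp_add, ← add_div]
  have hx : -|x - a| ≤ |a - a'| + -|x - a'| := by linarith [abs_sub_le x a a']
  gcongr

theorem withDensity_le_smul_withDensity {α : Type*} [MeasurableSpace α] {μ : Measure α}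
    {f g : α → ENNReal} {c : ENNReal} (hc : c ≠ ⊤) (hfg : ∀ x, f x ≤ c * g x) :
    μ.withDensity f ≤ c • μ.withDensity g := by
  rw [← withDensity_smul' c g hc]
  exact withDensity_mono (Filter.Eventually.of_forall hfg)

theorem laplace_le_smul_laplace {b : ℝ} (hb : 0 ≤ b) (a a' : ℝ) :
    laplace a b ≤ ENNReal.ofReal (Real.exp (|a - a'| / b)) • laplace a' b := by
  refine withDensity_le_smul_withDensity ENNReal.ofReal_ne_top fun x => ?_
  rw [← ENNReal.ofReal_mul (Real.exp_nonneg _)]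
  exact ENNReal.ofReal_le_ofReal (laplace_density_le_exp_mul hb a a' x)

theorem laplace_shift_ratio_general (b a a' : ℝ) (hb : 0 < b) (S : Set ℝ) :
    laplace a b S ≤ ENNReal.ofReal (Real.exp (|a - a'| / b)) * laplace a' b S :=
  Measure.le_iff'.mp (laplace_le_smul_laplace hb.le a a') S

/-- For `b > 0` and `a, a' ∈ ℝ`, for every Borel measurable `S ⊆ ℝ`,
`Lap(a,b)(S) ≤ exp(|a − a'|/b) · Lap(a',b)(S)`. -/
theorem laplace_shift_ratio (b a a' : ℝ) (hb : 0 < b) (S : Set ℝ) (hS : MeasurableSet S) :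
    laplace a b S ≤ ENNReal.ofReal (Real.exp (|a - a'| / b)) * laplace a' b S :=
  laplace_shift_ratio_general b a a' hb S
end

section
/- (Laplace mechanism satisfies ε-DP.) Let X be a countable type, let Q be a real-valued function on datasets over X whose global sensitivity is at most Δ > 0, i.e., |Q(D) − Q(D + {r})| ≤ Δ for every dataset D and record r ∈ X, and let ε > 0. Then the mechanism M sending each dataset D to the measure Lap(Q(D), Δ/ε) satisfies ε-DP: for every pair of neighboring datasets D, D' and every Borel set S ⊆ ℝ, M(D)(S) ≤ exp(ε) · M(D')(S). -/
/-! By the triangle inequality the Laplace densities satisfy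
`p_a(x) ≤ exp (|a - a'| / b) · p_a'(x)` pointwise, so the same factor bounds the ratio of the
masses of any set. For neighbouring datasets `|Q D - Q D'| ≤ Δ`, and the scale `b = Δ / ε`
makes the factor at most `exp ε`. -/

open MeasureTheory

lemma exp_neg_abs_sub_div_le_mul (a a' : ℝ) {b : ℝ} (hb : 0 ≤ b) (x : ℝ) :
    Real.exp (-|x - a| / b) ≤ Real.exp (|a - a'| / b) * Real.exp (-|x - a'| / b) := by
  rw [← Real.exp_add, Real.exp_le_exp, ← add_div]
  gcongr
  linarith [abs_sub_le x a a']

theorem laplace_apply_le_exp_mul (a a' : ℝ) {b : ℝ} (hb : 0 ≤ b) (S : Set ℝ) :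
    laplace a b S ≤ ENNReal.ofReal (Real.exp (|a - a'| / b)) * laplace a' b S := by
  rw [laplace, laplace, withDensity_apply' _ S, withDensity_apply' _ S,
    ← lintegral_const_mul' _ _ ENNReal.ofReal_ne_top]
  refine lintegral_mono fun x => ?_
  rw [← ENNReal.ofReal_mul (Real.exp_pos _).le, mul_left_comm]
  gcongr
  exact exp_neg_abs_sub_div_le_mul a a' hb x

theorem laplace_mechanism_dp_general {X : Type*}
    (Q : Multiset X → ℝ) (Δ ε : ℝ) (hΔ : 0 < Δ) (hε : 0 < ε)
    (hsens : ∀ (D : Multiset X) (r : X), |Q D - Q (r ::ₘ D)| ≤ Δ)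
    (D D' : Multiset X) (hnbr : ∃ r : X, D' = r ::ₘ D ∨ D = r ::ₘ D')
    (S : Set ℝ) :
    laplace (Q D) (Δ / ε) S ≤ ENNReal.ofReal (Real.exp ε) * laplace (Q D') (Δ / ε) S := by
  have hb : 0 < Δ / ε := div_pos hΔ hε
  have hQ : |Q D - Q D'| ≤ Δ := by
    obtain ⟨r, rfl | rfl⟩ := hnbr
    · exact hsens D r
    · rw [abs_sub_comm]
      exact hsens D' r
  calc laplace (Q D) (Δ / ε) S
      ≤ ENNReal.ofReal (Real.exp (|Q D - Q D'| / (Δ / ε))) * laplace (Q D') (Δ / ε) S :=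
        laplace_apply_le_exp_mul _ _ hb.le S
    _ ≤ ENNReal.ofReal (Real.exp ε) * laplace (Q D') (Δ / ε) S := by
        gcongr
        rwa [div_le_iff₀ hb, mul_div_cancel₀ _ hε.ne']

/-- The Laplace mechanism satisfies `ε`-DP: if `Q` has global sensitivity at most `Δ > 0`
(i.e. `|Q(D) − Q(D + {r})| ≤ Δ` for every dataset `D` and record `r`), then for every pair
of neighboring datasets `D, D'` (one obtained from the other by inserting a single record)
and every Borel set `S ⊆ ℝ`, `Lap(Q(D), Δ/ε)(S) ≤ exp(ε) · Lap(Q(D'), Δ/ε)(S)`. -/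
theorem laplace_mechanism_dp {X : Type*} [Countable X]
    (Q : Multiset X → ℝ) (Δ ε : ℝ) (hΔ : 0 < Δ) (hε : 0 < ε)
    (hsens : ∀ (D : Multiset X) (r : X), |Q D - Q (r ::ₘ D)| ≤ Δ)
    (D D' : Multiset X) (hnbr : ∃ r : X, D' = r ::ₘ D ∨ D = r ::ₘ D')
    (S : Set ℝ) (hS : MeasurableSet S) :
    laplace (Q D) (Δ / ε) S ≤ ENNReal.ofReal (Real.exp ε) * laplace (Q D') (Δ / ε) S :=
  laplace_mechanism_dp_general Q Δ ε hΔ hε hsens D D' hnbr S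
end

section
/- (Sequential composition for PrDP.) Let X be a countable type and let M₁, …, M_k be mechanisms from datasets over X to measurable spaces Ω₁, …, Ω_k, where each M_i satisfies E_i-PrDP for a privacy budget function E_i : X → ℝ with E_i(r) > 0. Then the mechanism M sending each dataset D to the product measure M₁(D) ⊗ M₂(D) ⊗ ⋯ ⊗ M_k(D) on Ω₁ × ⋯ × Ω_k (the M_i run with independent randomness) satisfies E'-PrDP with E'(r) = Σ_{i=1}^{k} E_i(r). -/
/-!
PrDP of `M` says that the measures `M (r ::ₘ D)` and `M D` dominate each other up to the factor
`exp (E r)`. Domination `μ i ≤ c i • ν i` of every factor passes to the product measures with the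
factor `∏ i, c i`, and `∏ i, exp (E i r) = exp (∑ i, E i r)`.
-/

open MeasureTheory

/-- A mechanism `M` from datasets (finite multisets) over `X` to a measurable space `Ω`
satisfies `E`-per-record differential privacy if for every dataset `D`, record `r`, and
measurable output set `S`, both `M(D + {r})(S) ≤ exp(E r) · M(D)(S)` and
`M(D)(S) ≤ exp(E r) · M(D + {r})(S)`. -/
def PrDP {X : Type*} {Ω : Type*} [MeasurableSpace Ω]
    (E : X → ℝ) (M : Multiset X → Measure Ω) : Prop :=
  ∀ (D : Multiset X) (r : X) (S : Set Ω), MeasurableSet S →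
    M (r ::ₘ D) S ≤ ENNReal.ofReal (Real.exp (E r)) * M D S ∧
    M D S ≤ ENNReal.ofReal (Real.exp (E r)) * M (r ::ₘ D) S

namespace MeasureTheory

theorem OuterMeasure.pi_mono {ι : Type*} [Fintype ι] {α : ι → Type*}
    {m m' : ∀ i, OuterMeasure (α i)} (h : ∀ i, m i ≤ m' i) :
    OuterMeasure.pi m ≤ OuterMeasure.pi m' :=
  OuterMeasure.le_pi.2 fun s _ =>
    (OuterMeasure.pi_pi_le m s).trans (Finset.prod_le_prod' fun i _ => h i (s i))

namespace Measure

variable {ι : Type*} [Fintype ι] {α : ι → Type*} [∀ i, MeasurableSpace (α i)]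

theorem pi_mono {μ ν : ∀ i, Measure (α i)} (h : ∀ i, μ i ≤ ν i) :
    Measure.pi μ ≤ Measure.pi ν := by
  refine Measure.le_iff.2 fun s hs => ?_
  rw [Measure.pi_def, Measure.pi_def, toMeasure_apply _ _ hs, toMeasure_apply _ _ hs]
  exact OuterMeasure.pi_mono (fun i => toOuterMeasure_le.2 (h i)) s

theorem pi_nnreal_smul (c : ι → NNReal) (μ : ∀ i, Measure (α i)) [∀ i, SigmaFinite (μ i)] :
    Measure.pi (fun i => c i • μ i) = (∏ i, c i) • Measure.pi μ := by
  refine Measure.pi_eq fun s hs => ?_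
  simp only [smul_apply, pi_pi, ENNReal.smul_def, smul_eq_mul, ENNReal.ofNNReal_finsetProd,
    Finset.prod_mul_distrib]

theorem pi_le_smul_pi {μ ν : ∀ i, Measure (α i)} [∀ i, SigmaFinite (ν i)] {c : ι → NNReal}
    (h : ∀ i, μ i ≤ c i • ν i) :
    Measure.pi μ ≤ (∏ i, c i) • Measure.pi ν :=
  (pi_mono h).trans_eq (pi_nnreal_smul c ν)

end Measure

end MeasureTheory

theorem prDP_iff_le_smul {X Ω : Type*} [MeasurableSpace Ω] (E : X → ℝ)
    (M : Multiset X → Measure Ω) :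
    PrDP E M ↔ ∀ D r, M (r ::ₘ D) ≤ (Real.exp (E r)).toNNReal • M D ∧
      M D ≤ (Real.exp (E r)).toNNReal • M (r ::ₘ D) := by
  simp only [PrDP, Measure.le_iff, Measure.smul_apply, Measure.nnreal_smul_coe_apply,
    ← forall_and]
  -- `ENNReal.ofReal x` unfolds to `↑x.toNNReal`
  rfl

theorem prdp_sequential_composition_general {X : Type*} (k : ℕ)
    (Ω : Fin k → Type*) [∀ i, MeasurableSpace (Ω i)]
    (E : Fin k → X → ℝ)
    (M : ∀ i : Fin k, Multiset X → Measure (Ω i))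
    (hM : ∀ i D, IsProbabilityMeasure (M i D))
    (hPrDP : ∀ i, PrDP (E i) (M i)) :
    PrDP (fun r => ∑ i, E i r) (fun D => Measure.pi fun i => M i D) := by
  refine (prDP_iff_le_smul _ _).2 fun D r => ?_
  have hexp : (Real.exp (∑ i, E i r)).toNNReal = ∏ i, (Real.exp (E i r)).toNNReal := by
    rw [Real.exp_sum, Real.toNNReal_prod_of_nonneg fun i _ => (Real.exp_pos _).le]
  have hbounds i := (prDP_iff_le_smul (E i) (M i)).1 (hPrDP i) D r
  rw [hexp]
  exact ⟨Measure.pi_le_smul_pi fun i => (hbounds i).1,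
    Measure.pi_le_smul_pi fun i => (hbounds i).2⟩

/-- Sequential composition for PrDP: if each mechanism `M i` satisfies `E i`-PrDP
(with `E i > 0`), then the mechanism sending `D` to the product measure
`M 0 D ⊗ ⋯ ⊗ M (k-1) D` (the mechanisms run with independent randomness) satisfies
`E'`-PrDP with `E' r = ∑ i, E i r`. -/
theorem prdp_sequential_composition {X : Type*} [Countable X] (k : ℕ)
    (Ω : Fin k → Type*) [∀ i, MeasurableSpace (Ω i)]
    (E : Fin k → X → ℝ) (hE : ∀ i r, 0 < E i r)
    (M : ∀ i : Fin k, Multiset X → Measure (Ω i))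
    (hM : ∀ i D, IsProbabilityMeasure (M i D))
    (hPrDP : ∀ i, PrDP (E i) (M i)) :
    PrDP (fun r => ∑ i, E i r) (fun D => Measure.pi fun i => M i D) :=
  prdp_sequential_composition_general k Ω E M hM hPrDP
end

section
/- (Sub-exponential concentration of Laplace sums.) Let n ≥ 1, b > 0, and let η₁, …, η_n be independent random variables each distributed as Lap(0, b) (i.e., distributed according to the product measure Lap(0,b)^{⊗n} on ℝ^n). Then for every t with 0 < t ≤ 2·√2·n·b, Pr[|η₁ + ⋯ + η_n| ≥ t] ≤ 2·exp(−t²/(8·n·b²)). -/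
/-! Chernoff's method. The Laplace law has moment generating function `1 / (1 - l² b²)` for
`|l| b < 1`, and `1 / (1 - x) ≤ exp (2 x)` for `0 ≤ x ≤ 1/2`. By independence and Markov's
inequality each tail of the sum is then at most `exp (-l t + 2 n l² b²)` as long as `l b ≤ 1/√2`.
The minimiser `l = t / (4 n b²)` gives `exp (-t² / (8 n b²))`, and it is admissible exactly when
`t ≤ 2 √2 n b`. -/

open MeasureTheory

open Real ProbabilityTheory Set

lemma integral_exp_mul_mul_exp_neg_abs_div {b l : ℝ} (hb : 0 < b) (hl : |l| * b < 1) :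
    ∫ x, exp (l * x) * exp (-|x| / b) = 2 * b / (1 - l ^ 2 * b ^ 2) := by
  obtain ⟨hlb₁, hlb₂⟩ : -1 < l * b ∧ l * b < 1 := abs_lt.mp (by rwa [abs_mul, abs_of_pos hb])
  have hpos : 0 < l + 1 / b := by rw [← neg_lt_iff_pos_add', lt_div_iff₀ hb]; linarith
  have hneg : l - 1 / b < 0 := by rw [sub_neg, lt_div_iff₀ hb]; exact hlb₂
  have on_Iic : EqOn (fun x => exp (l * x) * exp (-|x| / b)) (fun x => exp ((l + 1 / b) * x))
      (Iic 0) := fun x hx => by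
    simp only [abs_of_nonpos (mem_Iic.mp hx), ← exp_add]; congr 1; field_simp
  have on_Ioi : EqOn (fun x => exp (l * x) * exp (-|x| / b)) (fun x => exp ((l - 1 / b) * x))
      (Ioi 0) := fun x hx => by
    simp only [abs_of_pos (mem_Ioi.mp hx), ← exp_add]; congr 1; field_simp; ring
  rw [← intervalIntegral.integral_Iic_add_Ioi
      ((integrableOn_exp_mul_Iic hpos 0).congr_fun on_Iic.symm measurableSet_Iic)
      ((integrableOn_exp_mul_Ioi hneg 0).congr_fun on_Ioi.symm measurableSet_Ioi),
    setIntegral_congr_fun measurableSet_Iic on_Iic, setIntegral_congr_fun measurableSet_Ioi on_Ioi,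
    integral_exp_mul_Iic hpos, integral_exp_mul_Ioi hneg]
  simp only [mul_zero, exp_zero]
  rw [div_add_div _ _ hpos.ne' hneg.ne,
    div_eq_div_iff (mul_ne_zero hpos.ne' hneg.ne) (by nlinarith)]
  field_simp
  ring

lemma mgf_id_laplace (a : ℝ) {b l : ℝ} (hb : 0 < b) (hl : |l| * b < 1) :
    mgf id (laplace a b) l = exp (l * a) / (1 - l ^ 2 * b ^ 2) := by
  rw [mgf, laplace, integral_withDensity_eq_integral_toReal_smul (by fun_prop)
    (ae_of_all _ fun _ => ENNReal.ofReal_lt_top), ← integral_add_right_eq_self _ a]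
  have hdensity (x : ℝ) : (ENNReal.ofReal (1 / (2 * b) * exp (-|x| / b))).toReal =
      1 / (2 * b) * exp (-|x| / b) := ENNReal.toReal_ofReal (by positivity)
  simp only [id, smul_eq_mul, add_sub_cancel_right, hdensity]
  calc ∫ x, 1 / (2 * b) * exp (-|x| / b) * exp (l * (x + a))
      = exp (l * a) / (2 * b) * ∫ x, exp (l * x) * exp (-|x| / b) := by
        rw [← integral_const_mul]; congr 1 with x; rw [mul_add, exp_add]; ring
    _ = exp (l * a) / (1 - l ^ 2 * b ^ 2) := by
        rw [integral_exp_mul_mul_exp_neg_abs_div hb hl]; field_simp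

lemma isProbabilityMeasure_laplace (a : ℝ) {b : ℝ} (hb : 0 < b) :
    IsProbabilityMeasure (laplace a b) :=
  ⟨by simpa [mgf_zero', measureReal_def, ENNReal.toReal_eq_one_iff] using
    mgf_id_laplace a (l := 0) hb (by simp)⟩

lemma integrable_exp_mul_laplace (a : ℝ) {b l : ℝ} (hb : 0 < b) (hl : |l| * b < 1) :
    Integrable (fun x => exp (l * x)) (laplace a b) := by
  have hlb : l ^ 2 * b ^ 2 < 1 := by
    simpa [mul_pow] using pow_lt_one₀ (by positivity) hl two_ne_zero
  refine .of_integral_ne_zero ?_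
  rw [show ∫ x, exp (l * x) ∂laplace a b = _ from mgf_id_laplace a hb hl]
  exact (div_pos (exp_pos _) (sub_pos.mpr hlb)).ne'

lemma inv_one_sub_le_exp_two_mul {x : ℝ} (hx₀ : 0 ≤ x) (hx : x ≤ 1 / 2) :
    (1 - x)⁻¹ ≤ exp (2 * x) :=
  calc (1 - x)⁻¹ ≤ 2 * x + 1 := by
        rw [inv_le_iff_one_le_mul₀ (by linarith)]; nlinarith
    _ ≤ exp (2 * x) := add_one_le_exp _

lemma measureReal_abs_ge_le_exp_mul_mgf_add {Ω : Type*} [MeasurableSpace Ω] {μ : Measure Ω}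
    [IsFiniteMeasure μ] {X : Ω → ℝ} {l : ℝ} (ε : ℝ) (hl : 0 ≤ l)
    (h_int_pos : Integrable (fun ω => exp (l * X ω)) μ)
    (h_int_neg : Integrable (fun ω => exp (-l * X ω)) μ) :
    μ.real {ω | ε ≤ |X ω|} ≤ exp (-l * ε) * (mgf X μ l + mgf X μ (-l)) := by
  have h_split : {ω | ε ≤ |X ω|} ⊆ {ω | ε ≤ X ω} ∪ {ω | X ω ≤ -ε} := fun ω (hω : ε ≤ |X ω|) => by
    rcases le_abs'.mp hω with h | h
    · exact Or.inr h
    · exact Or.inl h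
  calc μ.real {ω | ε ≤ |X ω|}
      ≤ μ.real {ω | ε ≤ X ω} + μ.real {ω | X ω ≤ -ε} :=
        (measureReal_mono h_split).trans (measureReal_union_le _ _)
    _ ≤ exp (-l * ε) * mgf X μ l + exp (- -l * -ε) * mgf X μ (-l) :=
        add_le_add (measure_ge_le_exp_mul_mgf ε hl h_int_pos)
          (measure_le_le_exp_mul_mgf (-ε) (neg_nonpos.mpr hl) h_int_neg)
    _ = exp (-l * ε) * (mgf X μ l + mgf X μ (-l)) := by rw [neg_mul_neg]; ring

section Pi

variable {ι : Type*} [Fintype ι] (μ : Measure ℝ) [IsProbabilityMeasure μ]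

lemma iIndepFun_eval_pi : iIndepFun (fun (i : ι) (η : ι → ℝ) => η i) (Measure.pi fun _ => μ) :=
  iIndepFun_pi (X := fun _ => id) fun _ => aemeasurable_id

lemma integrable_exp_mul_sum_pi {l : ℝ} (h_int : Integrable (fun x => exp (l * x)) μ) :
    Integrable (fun η : ι → ℝ => exp (l * ∑ i, η i)) (Measure.pi fun _ => μ) := by
  simpa [Finset.sum_apply] using (iIndepFun_eval_pi μ).integrable_exp_mul_sum
    (fun i => measurable_pi_apply i) (s := Finset.univ)
    fun i _ => (measurePreserving_eval (fun _ => μ) i).integrable_comp_of_integrable h_int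

lemma mgf_sum_pi (l : ℝ) :
    mgf (fun η : ι → ℝ => ∑ i, η i) (Measure.pi fun _ => μ) l = mgf id μ l ^ Fintype.card ι := by
  have h_eval (i : ι) : mgf (fun η : ι → ℝ => η i) (Measure.pi fun _ => μ) l = mgf id μ l := by
    rw [← mgf_id_map (measurable_pi_apply i).aemeasurable, (measurePreserving_eval _ i).map_eq]
  simpa [Finset.sum_fn, h_eval] using
    (iIndepFun_eval_pi (ι := ι) μ).mgf_sum (t := l) (fun i => measurable_pi_apply i) Finset.univ

end Pi

lemma measureReal_abs_sum_laplace_ge_le {ι : Type*} [Fintype ι] {b l : ℝ} (hb : 0 < b)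
    (hl : 0 ≤ l) (hlb : l * b < 1) (t : ℝ) :
    (Measure.pi fun _ : ι => laplace 0 b).real {η | t ≤ |∑ i, η i|} ≤
      2 * exp (-l * t) * (1 - l ^ 2 * b ^ 2)⁻¹ ^ Fintype.card ι := by
  have := isProbabilityMeasure_laplace 0 hb
  have hl_pos : |l| * b < 1 := by rwa [abs_of_nonneg hl]
  have hl_neg : |-l| * b < 1 := by rwa [abs_neg, abs_of_nonneg hl]
  refine (measureReal_abs_ge_le_exp_mul_mgf_add t hl
    (integrable_exp_mul_sum_pi _ (integrable_exp_mul_laplace 0 hb hl_pos))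
    (integrable_exp_mul_sum_pi _ (integrable_exp_mul_laplace 0 hb hl_neg))).trans_eq ?_
  rw [mgf_sum_pi, mgf_sum_pi, mgf_id_laplace 0 hb hl_pos, mgf_id_laplace 0 hb hl_neg]
  simp only [mul_zero, exp_zero, neg_sq, one_div]
  ring

theorem laplace_sum_concentration_general (n : ℕ) (b : ℝ) (hb : 0 < b)
    (t : ℝ) (ht : 0 < t) (ht2 : t ≤ 2 * Real.sqrt 2 * n * b) :
    (Measure.pi fun _ : Fin n => laplace 0 b) {η : Fin n → ℝ | t ≤ |∑ i, η i|} ≤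
      ENNReal.ofReal (2 * Real.exp (-t ^ 2 / (8 * n * b ^ 2))) := by
  have hn : (0 : ℝ) < n := Nat.cast_pos.mpr <| Nat.pos_of_ne_zero <| by
    rintro rfl
    simp only [CharP.cast_eq_zero, mul_zero, zero_mul] at ht2
    linarith
  have := isProbabilityMeasure_laplace 0 hb
  set l := t / (4 * n * b ^ 2)
  have ht_sq : t ^ 2 ≤ 8 * n ^ 2 * b ^ 2 := by
    calc t ^ 2 ≤ (2 * √2 * n * b) ^ 2 := pow_le_pow_left₀ ht.le ht2 2
      _ = 8 * n ^ 2 * b ^ 2 := by rw [mul_pow, mul_pow, mul_pow, sq_sqrt zero_le_two]; ring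
  have hlb : l ^ 2 * b ^ 2 ≤ 1 / 2 := by
    rw [div_pow, div_mul_eq_mul_div, div_le_iff₀ (by positivity)]; nlinarith
  have hlb₁ : l * b < 1 := by nlinarith [show 0 ≤ l * b by positivity]
  rw [ENNReal.le_ofReal_iff_toReal_le (measure_ne_top _ _) (by positivity), ← measureReal_def]
  calc _ ≤ 2 * exp (-l * t) * (1 - l ^ 2 * b ^ 2)⁻¹ ^ n := by
        simpa only [Fintype.card_fin] using
          measureReal_abs_sum_laplace_ge_le (ι := Fin n) hb (by positivity) hlb₁ t
    _ ≤ 2 * exp (-l * t) * exp (2 * (l ^ 2 * b ^ 2)) ^ n := by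
        have := inv_one_sub_le_exp_two_mul (by positivity) hlb
        gcongr
        exact inv_nonneg.mpr (by linarith)
    _ = 2 * exp (-t ^ 2 / (8 * n * b ^ 2)) := by
        rw [← exp_nat_mul, mul_assoc, ← exp_add]; simp only [l]; congr 2; field_simp; ring

/-- Sub-exponential concentration of Laplace sums: if `η 0, …, η (n-1)` are independent,
each distributed as `Lap(0,b)` (i.e. `η` is distributed according to the product measure
`Lap(0,b)^{⊗n}` on `ℝ^n`), then for every `t` with `0 < t ≤ 2·√2·n·b`,
`Pr[|η 0 + ⋯ + η (n-1)| ≥ t] ≤ 2·exp(−t²/(8·n·b²))`. -/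
theorem laplace_sum_concentration (n : ℕ) (hn : 1 ≤ n) (b : ℝ) (hb : 0 < b)
    (t : ℝ) (ht : 0 < t) (ht2 : t ≤ 2 * Real.sqrt 2 * n * b) :
    (Measure.pi fun _ : Fin n => laplace 0 b) {η : Fin n → ℝ | t ≤ |∑ i, η i|} ≤
      ENNReal.ofReal (2 * Real.exp (-t ^ 2 / (8 * n * b ^ 2))) :=
  laplace_sum_concentration_general n b hb t ht ht2
end

section
/- (No early stop in privacy-specified domain partitioning.) Let ε̌ > 0, β ∈ (0, 1), L ∈ ℕ with L ≥ 1, and define thresholds T_i = ln(L/β)/(2^{i−1}·ε̌) for i = 1, …, L. Let c₁, …, c_L ≥ 0 be reals, η₁, …, η_L ∈ ℝ with |η_i| < T_i for all i, and let ε_min > 0 satisfy ε_min ≤ 2^L·ε̌ and the property that c_i = 0 for every i with 2^i·ε̌ < ε_min. Define ℓ as the least index i ∈ {1, …, L} with c_i + η_i ≥ T_i if such an index exists, and ℓ = L otherwise. Then 2^{ℓ−1}·ε̌ ≥ ε_min/2. -/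
lemma pos_of_le_add_of_abs_lt {α : Type*} [AddCommGroup α] [LinearOrder α]
    [IsOrderedAddMonoid α] {c η t : α} (hpass : t ≤ c + η) (hη : |η| < t) : 0 < c := by
  calc 0 ≤ |η| - η := sub_nonneg.2 (le_abs_self η)
    _ < t - η := sub_lt_sub_right hη η
    _ ≤ c := sub_le_iff_le_add.2 hpass

lemma half_le_two_pow_pred_mul {α : Type*} [Field α] [LinearOrder α] [IsStrictOrderedRing α]
    {x y : α} {n : ℕ} (hn : 1 ≤ n) (h : x ≤ 2 ^ n * y) :
    x / 2 ≤ 2 ^ (n - 1) * y := by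
  rw [← pow_sub_one_mul (by omega : n ≠ 0)] at h
  linarith

theorem prdp_count_no_early_stop_general
    (εcheck : ℝ) (L : ℕ) (T : ℕ → ℝ) (c η : ℕ → ℝ)
    (hη : ∀ i ∈ Finset.Icc 1 L, |η i| < T i)
    (εmin : ℝ) (hεminU : εmin ≤ 2 ^ L * εcheck)
    (hzero : ∀ i ∈ Finset.Icc 1 L, 2 ^ i * εcheck < εmin → c i = 0)
    (ℓ : ℕ) (hℓmem : ℓ ∈ Finset.Icc 1 L)
    (hℓ : (T ℓ ≤ c ℓ + η ℓ ∧ ∀ i ∈ Finset.Icc 1 L, i < ℓ → c i + η i < T i) ∨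
          (ℓ = L ∧ ∀ i ∈ Finset.Icc 1 L, c i + η i < T i)) :
    εmin / 2 ≤ 2 ^ (ℓ - 1) * εcheck := by
  refine half_le_two_pow_pred_mul (Finset.mem_Icc.mp hℓmem).1 ?_
  rcases hℓ with ⟨hpass, -⟩ | ⟨rfl, -⟩
  · by_contra! hbelow
    exact (pos_of_le_add_of_abs_lt hpass (hη ℓ hℓmem)).ne' (hzero ℓ hℓmem hbelow)
  · exact hεminU

/-- No early stop in privacy-specified domain partitioning (deterministic core of
Algorithm 1, PrDP Count): with thresholds `T i = ln(L/β)/(2^(i-1)·ε̌)`, counts `c i ≥ 0`,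
noises `|η i| < T i`, and `ε_min > 0` such that `ε_min ≤ 2^L·ε̌` and `c i = 0` whenever
`2^i·ε̌ < ε_min`, if `ℓ` is the least index `i ∈ {1,…,L}` with `c i + η i ≥ T i` when such
an index exists and `ℓ = L` otherwise, then `2^(ℓ-1)·ε̌ ≥ ε_min/2`. -/
theorem prdp_count_no_early_stop
    (εcheck β : ℝ) (hεcheck : 0 < εcheck) (hβ : β ∈ Set.Ioo (0 : ℝ) 1)
    (L : ℕ) (hL : 1 ≤ L)
    (T : ℕ → ℝ) (hT : ∀ i ∈ Finset.Icc 1 L, T i = Real.log (L / β) / (2 ^ (i - 1) * εcheck))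
    (c η : ℕ → ℝ)
    (hc : ∀ i ∈ Finset.Icc 1 L, 0 ≤ c i)
    (hη : ∀ i ∈ Finset.Icc 1 L, |η i| < T i)
    (εmin : ℝ) (hεmin : 0 < εmin) (hεminU : εmin ≤ 2 ^ L * εcheck)
    (hzero : ∀ i ∈ Finset.Icc 1 L, 2 ^ i * εcheck < εmin → c i = 0)
    (ℓ : ℕ) (hℓmem : ℓ ∈ Finset.Icc 1 L)
    (hℓ : (T ℓ ≤ c ℓ + η ℓ ∧ ∀ i ∈ Finset.Icc 1 L, i < ℓ → c i + η i < T i) ∨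
          (ℓ = L ∧ ∀ i ∈ Finset.Icc 1 L, c i + η i < T i)) :
    εmin / 2 ≤ 2 ^ (ℓ - 1) * εcheck :=
  prdp_count_no_early_stop_general εcheck L T c η hη εmin hεminU hzero ℓ hℓmem hℓ
end

section
/- (Bound on the mass of discarded domains.) Let ε̌ > 0, β ∈ (0, 1), L ∈ ℕ with L ≥ 1, and define thresholds T_i = ln(L/β)/(2^{i−1}·ε̌) for i = 1, …, L. Let c₁, …, c_L ≥ 0 be reals, η₁, …, η_L ∈ ℝ with |η_i| < T_i for all i, and let ε_min > 0 satisfy ε_min ≤ 2^L·ε̌ and the property that c_i = 0 for every i with 2^i·ε̌ < ε_min. Define ℓ as the least index i ∈ {1, …, L} with c_i + η_i ≥ T_i if such an index exists, and ℓ = L otherwise. Then Σ_{i=1}^{ℓ−1} c_i ≤ 8·ln(L/β)/ε_min. -/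
/-!
Let `m` be the least index with `ε_min ≤ 2^m·ε̌`. Domains below `m` are empty by assumption,
and every domain `i < ℓ` failed its test, so
`c i < T i - η i < 2 T i = 4 ln(L/β) / (2^i·ε̌)`.
The surviving terms form a geometric tail starting at `m`, whose sum is at most
`8 ln(L/β) / (2^m·ε̌) ≤ 8 ln(L/β) / ε_min`.
-/

open Finset

lemma sum_div_two_pow_le_of_forall_le {a : ℝ} (ha : 0 ≤ a) {m : ℕ} (s : Finset ℕ)
    (hs : ∀ i ∈ s, m ≤ i) : ∑ i ∈ s, a / 2 ^ i ≤ 2 * a / 2 ^ m := by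
  obtain ⟨n, hsn⟩ : ∃ n, s ⊆ Ico m n :=
    ⟨s.sup id + 1, fun i hi => mem_Ico.2 ⟨hs i hi, Nat.lt_succ_of_le (le_sup (f := id) hi)⟩⟩
  calc ∑ i ∈ s, a / 2 ^ i
      ≤ ∑ i ∈ Ico m n, a / 2 ^ i :=
        sum_le_sum_of_subset_of_nonneg hsn fun _ _ _ => by positivity
    _ = a * ∑ i ∈ Ico m n, (1 / 2 : ℝ) ^ i := by
        simp only [mul_sum, div_eq_mul_inv, one_mul, inv_pow]
    _ ≤ a * ((1 / 2) ^ m / (1 - 1 / 2)) := by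
        gcongr; exact geom_sum_Ico_le_of_lt_one (by norm_num) (by norm_num)
    _ = 2 * a / 2 ^ m := by rw [one_div_pow]; field_simp; ring

lemma sum_le_of_eq_zero_of_le_div_two_pow {c : ℕ → ℝ} {a : ℝ} (ha : 0 ≤ a) {m : ℕ}
    (s : Finset ℕ) (hzero : ∀ i ∈ s, i < m → c i = 0)
    (hle : ∀ i ∈ s, m ≤ i → c i ≤ a / 2 ^ i) :
    ∑ i ∈ s, c i ≤ 2 * a / 2 ^ m := by
  rw [← sum_filter_of_ne (p := (m ≤ ·))
    fun i hi hne => not_lt.1 fun him => hne (hzero i hi him)]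
  calc ∑ i ∈ s with m ≤ i, c i
      ≤ ∑ i ∈ s with m ≤ i, a / 2 ^ i :=
        sum_le_sum fun i hi => hle i (mem_filter.1 hi).1 (mem_filter.1 hi).2
    _ ≤ 2 * a / 2 ^ m := sum_div_two_pow_le_of_forall_le ha _ fun i hi => (mem_filter.1 hi).2

lemma le_div_two_pow_of_add_lt_of_abs_lt {A ε c η T : ℝ} {i : ℕ} (hi : 1 ≤ i)
    (hT : T = A / (2 ^ (i - 1) * ε)) (hfail : c + η < T) (hη : |η| < T) :
    c ≤ 4 * A / ε / 2 ^ i := by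
  have hpow : (2 : ℝ) ^ i = 2 ^ (i - 1) * 2 := by rw [← pow_succ, Nat.sub_add_cancel hi]
  calc c ≤ 2 * T := by linarith [neg_abs_le η]
    _ = 4 * A / ε / 2 ^ i := by rw [hT, hpow]; field_simp; ring

theorem prdp_count_discarded_mass_general
    (εcheck β : ℝ) (hεcheck : 0 < εcheck)
    (L : ℕ) (hL : 1 ≤ L)
    (T : ℕ → ℝ) (hT : ∀ i ∈ Finset.Icc 1 L, T i = Real.log (L / β) / (2 ^ (i - 1) * εcheck))
    (c η : ℕ → ℝ)
    (hη : ∀ i ∈ Finset.Icc 1 L, |η i| < T i)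
    (εmin : ℝ) (hεmin : 0 < εmin) (hεminU : εmin ≤ 2 ^ L * εcheck)
    (hzero : ∀ i ∈ Finset.Icc 1 L, 2 ^ i * εcheck < εmin → c i = 0)
    (ℓ : ℕ) (hℓmem : ℓ ∈ Finset.Icc 1 L)
    (hℓ : (T ℓ ≤ c ℓ + η ℓ ∧ ∀ i ∈ Finset.Icc 1 L, i < ℓ → c i + η i < T i) ∨
          (ℓ = L ∧ ∀ i ∈ Finset.Icc 1 L, c i + η i < T i)) :
    ∑ i ∈ Finset.Icc 1 (ℓ - 1), c i ≤ 8 * Real.log (L / β) / εmin := by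
  set A := Real.log (L / β)
  have hdomain : ∀ i ∈ Icc 1 (ℓ - 1), i ∈ Icc 1 L ∧ i < ℓ := fun i hi => by
    simp only [mem_Icc] at hi hℓmem ⊢; omega
  -- The threshold of domain 1 exceeds `|η 1| ≥ 0`, so `A > 0`.
  have hA : 0 < A := by
    have h1 : 1 ∈ Icc 1 L := mem_Icc.2 ⟨le_rfl, hL⟩
    have hT1 := hT 1 h1
    rw [pow_zero, one_mul] at hT1
    exact (div_pos_iff_of_pos_right hεcheck).1 (hT1 ▸ (abs_nonneg _).trans_lt (hη 1 h1))
  have hbound : ∀ i ∈ Icc 1 (ℓ - 1), c i ≤ 4 * A / εcheck / 2 ^ i := fun i hi => by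
    obtain ⟨hiL, hiℓ⟩ := hdomain i hi
    have hfailed : c i + η i < T i := by
      rcases hℓ with ⟨-, h⟩ | ⟨-, h⟩
      exacts [h i hiL hiℓ, h i hiL]
    exact le_div_two_pow_of_add_lt_of_abs_lt (mem_Icc.1 hiL).1 (hT i hiL) hfailed (hη i hiL)
  have hm : ∃ n, εmin ≤ 2 ^ n * εcheck := ⟨L, hεminU⟩
  calc ∑ i ∈ Icc 1 (ℓ - 1), c i
      ≤ 2 * (4 * A / εcheck) / 2 ^ Nat.find hm :=
        sum_le_of_eq_zero_of_le_div_two_pow (by positivity) _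
          (fun i hi him => hzero i (hdomain i hi).1 (not_le.1 (Nat.find_min hm him)))
          fun i hi _ => hbound i hi
    _ = 8 * A / (2 ^ Nat.find hm * εcheck) := by field_simp; ring
    _ ≤ 8 * A / εmin := div_le_div_of_nonneg_left (by positivity) hεmin (Nat.find_spec hm)

/-- Bound on the mass of discarded domains (deterministic core of Algorithm 1, PrDP Count):
with thresholds `T i = ln(L/β)/(2^(i-1)·ε̌)`, counts `c i ≥ 0`, noises `|η i| < T i`, and
`ε_min > 0` such that `ε_min ≤ 2^L·ε̌` and `c i = 0` whenever `2^i·ε̌ < ε_min`, if `ℓ` is the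
least index `i ∈ {1,…,L}` with `c i + η i ≥ T i` when such an index exists and `ℓ = L`
otherwise, then `∑_{i=1}^{ℓ-1} c i ≤ 8·ln(L/β)/ε_min`. -/
theorem prdp_count_discarded_mass
    (εcheck β : ℝ) (hεcheck : 0 < εcheck) (hβ : β ∈ Set.Ioo (0 : ℝ) 1)
    (L : ℕ) (hL : 1 ≤ L)
    (T : ℕ → ℝ) (hT : ∀ i ∈ Finset.Icc 1 L, T i = Real.log (L / β) / (2 ^ (i - 1) * εcheck))
    (c η : ℕ → ℝ)
    (hc : ∀ i ∈ Finset.Icc 1 L, 0 ≤ c i)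
    (hη : ∀ i ∈ Finset.Icc 1 L, |η i| < T i)
    (εmin : ℝ) (hεmin : 0 < εmin) (hεminU : εmin ≤ 2 ^ L * εcheck)
    (hzero : ∀ i ∈ Finset.Icc 1 L, 2 ^ i * εcheck < εmin → c i = 0)
    (ℓ : ℕ) (hℓmem : ℓ ∈ Finset.Icc 1 L)
    (hℓ : (T ℓ ≤ c ℓ + η ℓ ∧ ∀ i ∈ Finset.Icc 1 L, i < ℓ → c i + η i < T i) ∨
          (ℓ = L ∧ ∀ i ∈ Finset.Icc 1 L, c i + η i < T i)) :
    ∑ i ∈ Finset.Icc 1 (ℓ - 1), c i ≤ 8 * Real.log (L / β) / εmin :=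
  prdp_count_discarded_mass_general εcheck β hεcheck L hL T hT c η hη εmin hεmin hεminU hzero ℓ
    hℓmem hℓ
end

section
/- (Deterministic error bound for the PrDP counting aggregate.) Let ε̌ > 0, β ∈ (0, 1), L ∈ ℕ with L ≥ 1, and define thresholds T_i = ln(L/β)/(2^{i−1}·ε̌) for i = 1, …, L. Let c₁, …, c_L ≥ 0 be reals, η₁, …, η_L ∈ ℝ with |η_i| < T_i for all i, and let ε_min > 0 satisfy ε_min ≤ 2^L·ε̌ and the property that c_i = 0 for every i with 2^i·ε̌ < ε_min. Define ℓ as the least index i ∈ {1, …, L} with c_i + η_i ≥ T_i if such an index exists, and ℓ = L otherwise. Then |Σ_{i=ℓ}^{L} (c_i + η_i) − Σ_{i=1}^{L} c_i| ≤ 12·ln(L/β)/ε_min. -/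
/-!
With `T i = 2 ln(L/β) / (2^i ε̌)` the error is `∑_{i ≥ ℓ} η i - ∑_{i < ℓ} c i`, and both sums
are controlled by the geometric series of thresholds, which is at most twice its first term.
For the noise, `|η i| < T i` and the series starts at `ℓ`; for the counts, `c i < T i - η i < 2 T i`
below the stopping index and the series starts at the first nonzero count. Both starting
indices `i` satisfy `ε_min ≤ 2^i ε̌`: a nonzero count forces this by hypothesis, and the stopping
rule can only fire at `ℓ` when `c ℓ > T ℓ - η ℓ > 0`.
-/

open Finset

lemma geom_sum_le_of_lt_one_of_forall_le {R : Type*} [Field R] [LinearOrder R]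
    [IsStrictOrderedRing R] {x : R} (hx : 0 ≤ x) (h'x : x < 1) {s : Finset ℕ} {a : ℕ}
    (hs : ∀ i ∈ s, a ≤ i) :
    ∑ i ∈ s, x ^ i ≤ x ^ a / (1 - x) := by
  have hsub : s ⊆ Ico a (s.sup id + 1) := fun i hi =>
    mem_Ico.mpr ⟨hs i hi, Nat.lt_succ_of_le (le_sup (f := id) hi)⟩
  calc ∑ i ∈ s, x ^ i ≤ ∑ i ∈ Ico a (s.sup id + 1), x ^ i :=
        sum_le_sum_of_subset_of_nonneg hsub fun _ _ _ => pow_nonneg hx _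
    _ ≤ x ^ a / (1 - x) := geom_sum_Ico_le_of_lt_one hx h'x

lemma div_two_pow_pred_mul_eq {i : ℕ} (hi : 1 ≤ i) (A ε : ℝ) :
    A / (2 ^ (i - 1) * ε) = 2 * A * (2 ^ i * ε)⁻¹ := by
  obtain ⟨j, rfl⟩ := Nat.exists_eq_add_of_le' hi
  simp only [Nat.add_sub_cancel, pow_succ, mul_inv, div_eq_mul_inv]
  ring

lemma sum_Icc_add_sub_sum_Icc_eq {c η : ℕ → ℝ} {ℓ L : ℕ} (hℓ : 1 ≤ ℓ) (hℓL : ℓ ≤ L) :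
    ∑ i ∈ Icc ℓ L, (c i + η i) - ∑ i ∈ Icc 1 L, c i
      = ∑ i ∈ Icc ℓ L, η i - ∑ i ∈ Ico 1 ℓ, c i := by
  rw [sum_add_distrib, ← Ico_add_one_right_eq_Icc ℓ L, ← Ico_add_one_right_eq_Icc 1 L,
    ← sum_Ico_consecutive _ hℓ (by omega)]
  ring

section

variable {s : Finset ℕ} {f T c η : ℕ → ℝ} {K ε x : ℝ}

lemma sum_inv_two_pow_mul_le (hx : 0 < x) (hs : ∀ i ∈ s, x ≤ 2 ^ i * ε) :
    ∑ i ∈ s, (2 ^ i * ε)⁻¹ ≤ 2 / x := by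
  rcases s.eq_empty_or_nonempty with rfl | hne
  · simp only [sum_empty]; positivity
  have hm : x ≤ 2 ^ s.min' hne * ε := hs _ (s.min'_mem hne)
  have hε : 0 < ε := pos_of_mul_pos_right (hx.trans_le hm) (by positivity)
  calc ∑ i ∈ s, (2 ^ i * ε)⁻¹ = ε⁻¹ * ∑ i ∈ s, (2⁻¹ : ℝ) ^ i := by
        simp only [mul_sum, mul_inv, inv_pow, mul_comm]
    _ ≤ ε⁻¹ * ((2⁻¹ : ℝ) ^ s.min' hne / (1 - 2⁻¹)) := by
        gcongr
        exact geom_sum_le_of_lt_one_of_forall_le (by norm_num) (by norm_num)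
          fun i hi => s.min'_le i hi
    _ = 2 / (2 ^ s.min' hne * ε) := by rw [inv_pow]; field_simp; ring
    _ ≤ 2 / x := by gcongr

lemma sum_le_of_le_inv_two_pow_mul (hK : 0 ≤ K) (hx : 0 < x)
    (hf : ∀ i ∈ s, f i ≤ K * (2 ^ i * ε)⁻¹) (hs : ∀ i ∈ s, x ≤ 2 ^ i * ε) :
    ∑ i ∈ s, f i ≤ 2 * K / x :=
  calc ∑ i ∈ s, f i ≤ ∑ i ∈ s, K * (2 ^ i * ε)⁻¹ := sum_le_sum hf
    _ = K * ∑ i ∈ s, (2 ^ i * ε)⁻¹ := by rw [mul_sum]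
    _ ≤ K * (2 / x) := by gcongr; exact sum_inv_two_pow_mul_le hx hs
    _ = 2 * K / x := by ring

lemma sum_le_of_le_inv_two_pow_mul_of_eq_zero (hK : 0 ≤ K) (hx : 0 < x)
    (hf : ∀ i ∈ s, f i ≤ K * (2 ^ i * ε)⁻¹) (hzero : ∀ i ∈ s, 2 ^ i * ε < x → f i = 0) :
    ∑ i ∈ s, f i ≤ 2 * K / x := by
  rw [← sum_filter_of_ne (p := fun i => x ≤ 2 ^ i * ε) fun i hi hfi =>
    not_lt.mp fun h => hfi (hzero i hi h)]
  exact sum_le_of_le_inv_two_pow_mul hK hx (fun i hi => hf i (mem_filter.mp hi).1)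
    fun i hi => (mem_filter.mp hi).2

lemma abs_sum_le_of_abs_lt_threshold (hK : 0 ≤ K) (hx : 0 < x)
    (hT : ∀ i ∈ s, T i = K * (2 ^ i * ε)⁻¹) (hη : ∀ i ∈ s, |η i| < T i)
    (hs : ∀ i ∈ s, x ≤ 2 ^ i * ε) :
    |∑ i ∈ s, η i| ≤ 2 * K / x :=
  (abs_sum_le_sum_abs _ _).trans <|
    sum_le_of_le_inv_two_pow_mul hK hx (fun i hi => hT i hi ▸ (hη i hi).le) hs

lemma sum_le_of_add_lt_threshold (hK : 0 ≤ K) (hx : 0 < x)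
    (hT : ∀ i ∈ s, T i = K * (2 ^ i * ε)⁻¹) (hη : ∀ i ∈ s, |η i| < T i)
    (hstop : ∀ i ∈ s, c i + η i < T i) (hzero : ∀ i ∈ s, 2 ^ i * ε < x → c i = 0) :
    ∑ i ∈ s, c i ≤ 2 * (2 * K) / x := by
  refine sum_le_of_le_inv_two_pow_mul_of_eq_zero (by positivity) hx (fun i hi => ?_) hzero
  have := neg_lt_of_abs_lt (hη i hi)
  linarith [hstop i hi, hT i hi]

lemma le_two_pow_mul_of_threshold_le {t c η : ℝ} {ℓ : ℕ} (hη : |η| < t) (hstop : t ≤ c + η)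
    (hzero : 2 ^ ℓ * ε < x → c = 0) : x ≤ 2 ^ ℓ * ε := by
  by_contra! h
  rw [hzero h, zero_add] at hstop
  exact (lt_of_abs_lt hη).not_ge hstop

end

theorem prdp_count_error_bound_general
    (εcheck β : ℝ)
    (L : ℕ)
    (T : ℕ → ℝ) (hT : ∀ i ∈ Finset.Icc 1 L, T i = Real.log (L / β) / (2 ^ (i - 1) * εcheck))
    (c η : ℕ → ℝ)
    (hc : ∀ i ∈ Finset.Icc 1 L, 0 ≤ c i)
    (hη : ∀ i ∈ Finset.Icc 1 L, |η i| < T i)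
    (εmin : ℝ) (hεmin : 0 < εmin) (hεminU : εmin ≤ 2 ^ L * εcheck)
    (hzero : ∀ i ∈ Finset.Icc 1 L, 2 ^ i * εcheck < εmin → c i = 0)
    (ℓ : ℕ) (hℓmem : ℓ ∈ Finset.Icc 1 L)
    (hℓ : (T ℓ ≤ c ℓ + η ℓ ∧ ∀ i ∈ Finset.Icc 1 L, i < ℓ → c i + η i < T i) ∨
          (ℓ = L ∧ ∀ i ∈ Finset.Icc 1 L, c i + η i < T i)) :
    |(∑ i ∈ Finset.Icc ℓ L, (c i + η i)) - ∑ i ∈ Finset.Icc 1 L, c i| ≤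
      12 * Real.log (L / β) / εmin := by
  obtain ⟨hℓ1, hℓL⟩ := mem_Icc.mp hℓmem
  set A := Real.log (L / β)
  have hTA : ∀ i ∈ Icc 1 L, T i = 2 * A * (2 ^ i * εcheck)⁻¹ := fun i hi =>
    (hT i hi).trans (div_two_pow_pred_mul_eq (mem_Icc.mp hi).1 A εcheck)
  have hεcheck : 0 < εcheck := pos_of_mul_pos_right (hεmin.trans_le hεminU) (by positivity)
  have hA : 0 ≤ A := by
    have hTℓ := (abs_nonneg _).trans (hη ℓ hℓmem).le
    rw [hTA ℓ hℓmem] at hTℓ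
    exact nonneg_of_mul_nonneg_right (nonneg_of_mul_nonneg_left hTℓ (by positivity)) two_pos
  have hεℓ : εmin ≤ 2 ^ ℓ * εcheck := hℓ.elim
    (fun h => le_two_pow_mul_of_threshold_le (hη ℓ hℓmem) h.1 (hzero ℓ hℓmem))
    fun h => h.1 ▸ hεminU
  have htail : Icc ℓ L ⊆ Icc 1 L := Icc_subset_Icc_left hℓ1
  have hhead : Ico 1 ℓ ⊆ Icc 1 L := Ico_subset_Icc_self.trans (Icc_subset_Icc_right hℓL)
  have hnoise := abs_sum_le_of_abs_lt_threshold (by positivity) hεmin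
    (fun i hi => hTA i (htail hi)) (fun i hi => hη i (htail hi))
    fun i hi => hεℓ.trans <| by gcongr; exacts [one_le_two, (mem_Icc.mp hi).1]
  have hcount := sum_le_of_add_lt_threshold (by positivity) hεmin
    (fun i hi => hTA i (hhead hi)) (fun i hi => hη i (hhead hi))
    (fun i hi => hℓ.elim (fun h => h.2 i (hhead hi) (mem_Ico.mp hi).2) fun h => h.2 i (hhead hi))
    fun i hi => hzero i (hhead hi)
  have hcount0 : 0 ≤ ∑ i ∈ Ico 1 ℓ, c i := sum_nonneg fun i hi => hc i (hhead hi)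
  rw [sum_Icc_add_sub_sum_Icc_eq hℓ1 hℓL]
  calc _ ≤ |∑ i ∈ Icc ℓ L, η i| + |∑ i ∈ Ico 1 ℓ, c i| := abs_sub _ _
    _ ≤ 2 * (2 * A) / εmin + 2 * (2 * (2 * A)) / εmin := by
        rw [abs_of_nonneg hcount0]; gcongr
    _ = 12 * A / εmin := by ring

/-- Deterministic error bound for the PrDP counting aggregate (Algorithm 1, PrDP Count):
with thresholds `T i = ln(L/β)/(2^(i-1)·ε̌)`, counts `c i ≥ 0`, noises `|η i| < T i`, and
`ε_min > 0` such that `ε_min ≤ 2^L·ε̌` and `c i = 0` whenever `2^i·ε̌ < ε_min`, if `ℓ` is the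
least index `i ∈ {1,…,L}` with `c i + η i ≥ T i` when such an index exists and `ℓ = L`
otherwise, then `|∑_{i=ℓ}^{L} (c i + η i) − ∑_{i=1}^{L} c i| ≤ 12·ln(L/β)/ε_min`. -/
theorem prdp_count_error_bound
    (εcheck β : ℝ) (hεcheck : 0 < εcheck) (hβ : β ∈ Set.Ioo (0 : ℝ) 1)
    (L : ℕ) (hL : 1 ≤ L)
    (T : ℕ → ℝ) (hT : ∀ i ∈ Finset.Icc 1 L, T i = Real.log (L / β) / (2 ^ (i - 1) * εcheck))
    (c η : ℕ → ℝ)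
    (hc : ∀ i ∈ Finset.Icc 1 L, 0 ≤ c i)
    (hη : ∀ i ∈ Finset.Icc 1 L, |η i| < T i)
    (εmin : ℝ) (hεmin : 0 < εmin) (hεminU : εmin ≤ 2 ^ L * εcheck)
    (hzero : ∀ i ∈ Finset.Icc 1 L, 2 ^ i * εcheck < εmin → c i = 0)
    (ℓ : ℕ) (hℓmem : ℓ ∈ Finset.Icc 1 L)
    (hℓ : (T ℓ ≤ c ℓ + η ℓ ∧ ∀ i ∈ Finset.Icc 1 L, i < ℓ → c i + η i < T i) ∨
          (ℓ = L ∧ ∀ i ∈ Finset.Icc 1 L, c i + η i < T i)) :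
    |(∑ i ∈ Finset.Icc ℓ L, (c i + η i)) - ∑ i ∈ Finset.Icc 1 L, c i| ≤
      12 * Real.log (L / β) / εmin :=
  prdp_count_error_bound_general εcheck β L T hT c η hc hη εmin hεmin hεminU hzero ℓ hℓmem hℓ
end

section
/- (Utility of Algorithm 1, PrDP Count.) Let X be a countable type, ε̌, ε̂ > 0 with ε̌ ≤ ε̂, let E : X → [ε̌, ε̂] be a privacy budget function, let D be a nonempty finite multiset over X, let ε_min = min{E(r) : r ∈ D}, let L = ⌈log₂(ε̂/ε̌)⌉ (with L ≥ 1), and for i = 1, …, L let c_i be the number of records r of D (counted with multiplicity) with E(r) ∈ (2^{i−1}·ε̌, 2^i·ε̌] for i ≥ 2, and with E(r) ∈ [ε̌, 2·ε̌] for i = 1. Let β ∈ (0,1), set T_i = ln(L/β)/(2^{i−1}·ε̌), and let η = (η₁, …, η_L) be distributed according to the product measure Lap(0, 1/(2^0·ε̌)) ⊗ ⋯ ⊗ Lap(0, 1/(2^{L−1}·ε̌)) on ℝ^L. Define ℓ(η) as the least index i with c_i + η_i ≥ T_i if one exists, and ℓ(η) = L otherwise; set ε_τ(η) = 2^{ℓ(η)−1}·ε̌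 and Q̃(η) = Σ_{i=ℓ(η)}^{L} (c_i + η_i). Then with probability at least 1 − β over η: ε_τ(η) ≥ ε_min/2 and |Q̃(η) − |D|| ≤ 12·ln(L/β)/ε_min, where |D| = Σ_{i=1}^{L} c_i is the total number of records in D. -/
/-!
Each threshold `Tᵢ` is `ln (L/β)` times the scale of the Laplace noise `ηᵢ`, so
`|ηᵢ| < Tᵢ` has probability `1 - β/L`, and all `L` of these events together have probability
`(1 - β/L)^L ≥ 1 - β` (Bernoulli). On that event no noisy count can pass its threshold below
the domain `i₀` containing `ε_min`, since those domains hold no records; hence the stopping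
index is at least `i₀`, which gives `ε_τ ≥ ε_min/2`. The error `Q̃ - |D|` is the sum of the
noises above the stopping index minus the counts below it; each term is bounded by `2Tᵢ`
(a count below the stopping index failed its threshold) and vanishes below `i₀`. The `Tᵢ`
halve at each step, so the error is at most `4 T_{i₀} ≤ 8 ln (L/β) / ε_min`.
-/

open MeasureTheory

open Real Set Finset

theorem laplace_zero_Ioo_neg_self {b t : ℝ} (hb : 0 < b) (ht : 0 ≤ t) :
    laplace 0 b (Ioo (-t) t) = ENNReal.ofReal (1 - exp (-t / b)) := by
  set g : ℝ → ℝ := fun x => 1 / (2 * b) * exp (-|x| / b) with hg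
  have hg_int : ∀ u v, IntervalIntegrable g volume u v :=
    fun u v => (by fun_prop : Continuous g).intervalIntegrable u v
  have h_right : ∫ x in (0)..t, g x = (1 - exp (-t / b)) / 2 := by
    have hderiv : ∀ x ∈ uIcc 0 t, HasDerivAt (fun x => -exp (-x / b) / 2) (g x) x := by
      intro x hx
      rw [uIcc_of_le ht] at hx
      have h := ((hasDerivAt_neg x).div_const b).exp.neg.div_const 2
      refine h.congr_deriv ?_
      simp only [hg, abs_of_nonneg hx.1]
      field_simp
    rw [intervalIntegral.integral_eq_sub_of_hasDerivAt hderiv (hg_int 0 t)]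
    simp only [neg_zero, zero_div, exp_zero]
    ring
  have h_left : ∫ x in (-t)..0, g x = ∫ x in (0)..t, g x := by
    simpa [hg] using (intervalIntegral.integral_comp_neg (a := 0) (b := t) g).symm
  rw [laplace, withDensity_apply _ measurableSet_Ioo, ← ofReal_integral_eq_lintegral_ofReal]
  · simp only [sub_zero]
    rw [← integral_Ioc_eq_integral_Ioo, ← intervalIntegral.integral_of_le (by linarith),
      ← intervalIntegral.integral_add_adjacent_intervals (hg_int _ 0) (hg_int 0 _), h_left, h_right]
    ring_nf
  · simpa [hg, IntegrableOn] using (hg_int (-t) t).1.mono_set Ioo_subset_Ioc_self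
  · exact Filter.Eventually.of_forall fun x => by positivity

instance (a b : ℝ) : SigmaFinite (laplace a b) :=
  SigmaFinite.withDensity_ofReal _

theorem pi_laplace_univ_pi_Ioo_neg {ι : Type*} [Fintype ι] {b T : ι → ℝ} {K : ℝ}
    (hb : ∀ i, 0 < b i) (hK : 0 ≤ K) (hT : ∀ i, T i = K * b i) :
    Measure.pi (fun i => laplace 0 (b i)) (univ.pi fun i => Ioo (-T i) (T i)) =
      ENNReal.ofReal (1 - exp (-K)) ^ Fintype.card ι := by
  rw [Measure.pi_pi, ← Finset.card_univ, ← Finset.prod_const]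
  refine Finset.prod_congr rfl fun i _ => ?_
  rw [hT, laplace_zero_Ioo_neg_self (hb i) (by have := hb i; positivity)]
  congr 3
  field_simp [(hb i).ne']

theorem one_sub_le_one_sub_div_pow {x : ℝ} {n : ℕ} (hn : n ≠ 0) (hx : x ≤ 2 * n) :
    1 - x ≤ (1 - x / n) ^ n := by
  have hn' : (n : ℝ) ≠ 0 := Nat.cast_ne_zero.2 hn
  have h := one_add_mul_le_pow (a := -(x / n))
    (by rw [neg_le_neg_iff, div_le_iff₀ (by positivity)]; linarith) n
  rwa [mul_neg, mul_div_cancel₀ _ hn', ← sub_eq_add_neg, ← sub_eq_add_neg] at h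

theorem ofReal_one_sub_le_pi_laplace_univ_pi_Ioo_neg {ι : Type*} [Fintype ι] [Nonempty ι]
    {b T : ι → ℝ} {β : ℝ} (hβ₀ : 0 < β) (hβ₁ : β ≤ 1) (hb : ∀ i, 0 < b i)
    (hT : ∀ i, T i = log (Fintype.card ι / β) * b i) :
    ENNReal.ofReal (1 - β) ≤
      Measure.pi (fun i => laplace 0 (b i)) (univ.pi fun i => Ioo (-T i) (T i)) := by
  have hn : (1 : ℝ) ≤ Fintype.card ι := Nat.one_le_cast.2 Fintype.card_pos
  have hβn : β / Fintype.card ι ≤ 1 := by rw [div_le_one (by positivity)]; linarith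
  rw [pi_laplace_univ_pi_Ioo_neg hb (log_nonneg (by rw [le_div_iff₀ hβ₀]; linarith)) hT,
    exp_neg, exp_log (by positivity), inv_div, ← ENNReal.ofReal_pow (by linarith)]
  exact ENNReal.ofReal_le_ofReal
    (one_sub_le_one_sub_div_pow Fintype.card_pos.ne' (by linarith))

theorem le_two_pow_mul_of_ceil_logb_le {a b : ℝ} {L : ℕ} (ha : 0 < a)
    (hL : ⌈logb 2 (b / a)⌉ ≤ L) : b ≤ 2 ^ L * a := by
  rcases le_or_gt b 0 with hb | hb
  · exact hb.trans (by positivity)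
  have h : logb 2 (b / a) ≤ L := (Int.le_ceil _).trans (by exact_mod_cast hL)
  rwa [logb_le_iff_le_rpow one_lt_two (div_pos hb ha), rpow_natCast, div_le_iff₀ ha] at h

theorem sum_ite_le_inv_two_pow {L : ℕ} (a : Fin L) :
    ∑ i : Fin L, (if a ≤ i then (2⁻¹ : ℝ) ^ (i : ℕ) else 0) ≤ 2 * 2⁻¹ ^ (a : ℕ) := by
  have hsum : Summable fun n : ℕ => if (a : ℕ) ≤ n then (2⁻¹ : ℝ) ^ n else 0 :=
    summable_geometric_two.of_nonneg_of_le (fun n => by positivity)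
      fun n => by split_ifs <;> simp
  simp only [Fin.le_def]
  rw [Fin.sum_univ_eq_sum_range (fun n => if (a : ℕ) ≤ n then (2⁻¹ : ℝ) ^ n else 0),
    ← tsum_geometric_inv_two_ge]
  exact hsum.sum_le_tsum _ fun n _ => by positivity

theorem Fin.exists_first_or_last {L : ℕ} (hL : 1 ≤ L) (P : Fin L → Prop) :
    ∃ ℓ : Fin L, (P ℓ ∧ ∀ i < ℓ, ¬ P i) ∨ ((ℓ : ℕ) = L - 1 ∧ ∀ i, ¬ P i) := by
  by_cases h : ∃ i, P i
  · obtain ⟨ℓ, hℓ, hmin⟩ := WellFounded.has_min wellFounded_lt {i | P i} h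
    exact ⟨ℓ, .inl ⟨hℓ, fun i hi hPi => hmin i hPi hi⟩⟩
  · push Not at h
    exact ⟨⟨L - 1, by omega⟩, .inr ⟨rfl, h⟩⟩

theorem Multiset.card_eq_sum_card_filter_of_existsUnique {α ι : Type*} [Fintype ι]
    (p : ι → α → Prop) [hp : ∀ i, DecidablePred (p i)] (s : Multiset α)
    (h : ∀ a ∈ s, ∃! i, p i a) : Multiset.card s = ∑ i, Multiset.card (s.filter (p i)) := by
  induction s using Multiset.induction_on with
  | empty => simp
  | cons a s ih =>
    obtain ⟨i₀, hi₀, huniq⟩ := h a (Multiset.mem_cons_self a s)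
    have hone : ∑ i, (if p i a then 1 else 0) = 1 := by
      rw [Finset.sum_eq_single i₀ (fun i _ hi => if_neg (mt (huniq i) hi)) (by simp), if_pos hi₀]
    simp only [Multiset.card_cons, Multiset.filter_cons, apply_ite Multiset.card,
      Multiset.card_add, Multiset.card_singleton, Multiset.card_zero]
    rw [ih fun b hb => h b (Multiset.mem_cons_of_mem hb)]
    calc ∑ i, Multiset.card (s.filter (p i)) + 1
        = ∑ i, (Multiset.card (s.filter (p i)) + if p i a then 1 else 0) := by
          rw [Finset.sum_add_distrib, hone]
      _ = _ := Finset.sum_congr rfl fun i _ => by split_ifs <;> omega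

/-- Index `i` is the paper's domain `i + 1`. -/
def InDyadicDomain (ε : ℝ) (i : ℕ) (v : ℝ) : Prop :=
  if i = 0 then v ∈ Icc ε (2 * ε) else v ∈ Ioc (2 ^ i * ε) (2 ^ (i + 1) * ε)

namespace InDyadicDomain

variable {ε v w : ℝ} {i j : ℕ}

theorem le_two_pow_succ_mul (h : InDyadicDomain ε i v) : v ≤ 2 ^ (i + 1) * ε := by
  unfold InDyadicDomain at h
  split_ifs at h with hi
  · subst hi; simpa [two_mul] using h.2
  · exact h.2

theorem two_pow_mul_lt (h : InDyadicDomain ε i v) (hi : i ≠ 0) : 2 ^ i * ε < v := by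
  unfold InDyadicDomain at h
  rw [if_neg hi] at h
  exact h.1

theorem le_of_le (hε : 0 ≤ ε) (hv : InDyadicDomain ε i v) (hw : InDyadicDomain ε j w)
    (hvw : v ≤ w) : i ≤ j := by
  by_contra! hji
  have : (2 : ℝ) ^ (j + 1) * ε ≤ 2 ^ i * ε := by gcongr <;> [norm_num; omega]
  linarith [hv.two_pow_mul_lt (by omega), hw.le_two_pow_succ_mul]

end InDyadicDomain

theorem exists_inDyadicDomain {ε v : ℝ} {L : ℕ} (hL : 1 ≤ L) (h₁ : ε ≤ v)
    (h₂ : v ≤ 2 ^ L * ε) : ∃ i < L, InDyadicDomain ε i v := by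
  classical
  have hex : ∃ n, v ≤ 2 ^ (n + 1) * ε := ⟨L - 1, by rwa [Nat.sub_add_cancel hL]⟩
  refine ⟨Nat.find hex, ?_, ?_⟩
  · have := Nat.find_min' hex (m := L - 1) (by rwa [Nat.sub_add_cancel hL])
    omega
  · unfold InDyadicDomain
    split_ifs with h0
    · have := Nat.find_spec hex
      rw [h0] at this
      exact ⟨h₁, by simpa using this⟩
    · have := Nat.find_min hex (Nat.sub_one_lt h0)
      rw [Nat.sub_add_cancel (Nat.one_le_iff_ne_zero.2 h0)] at this
      exact ⟨lt_of_not_ge this, Nat.find_spec hex⟩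

theorem existsUnique_inDyadicDomain {ε v : ℝ} {L : ℕ} (hε : 0 ≤ ε) (hL : 1 ≤ L) (h₁ : ε ≤ v)
    (h₂ : v ≤ 2 ^ L * ε) : ∃! i : Fin L, InDyadicDomain ε i v := by
  obtain ⟨i, hiL, hi⟩ := exists_inDyadicDomain hL h₁ h₂
  exact ⟨⟨i, hiL⟩, hi, fun j hj =>
    Fin.ext (le_antisymm (hj.le_of_le hε hi le_rfl) (hi.le_of_le hε hj le_rfl))⟩

theorem filter_inDyadicDomain_eq_zero {X : Type*} {E : X → ℝ} {D : Multiset X} {ε vmin : ℝ}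
    {i j : ℕ} (hε : 0 ≤ ε) (hvmin : InDyadicDomain ε j vmin) (hij : i < j)
    (hD : ∀ r ∈ D, vmin ≤ E r) :
    @Multiset.filter X (fun r => InDyadicDomain ε i (E r)) (Classical.decPred _) D = 0 := by
  classical
  exact Multiset.filter_eq_nil.2 fun r hr hir => (hvmin.le_of_le hε hir (hD r hr)).not_gt hij

theorem card_eq_sum_card_filter_inDyadicDomain {X : Type*} {E : X → ℝ} {ε : ℝ} {L : ℕ}
    (hε : 0 ≤ ε) (hL : 1 ≤ L) (hE : ∀ r, ε ≤ E r ∧ E r ≤ 2 ^ L * ε) (D : Multiset X) :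
    Multiset.card D = ∑ i : Fin L, Multiset.card
      (@Multiset.filter X (fun r => InDyadicDomain ε i (E r)) (Classical.decPred _) D) :=
  Multiset.card_eq_sum_card_filter_of_existsUnique (hp := fun _ => Classical.decPred _) _ D
    fun r _ => existsUnique_inDyadicDomain hε hL (hE r).1 (hE r).2

theorem abs_sum_filter_sub_sum_le {ι : Type*} [Fintype ι] [LinearOrder ι] {c η T : ι → ℝ}
    {i₀ ℓ : ι} (hc : ∀ i, 0 ≤ c i) (hc₀ : ∀ i < i₀, c i = 0) (hη : ∀ i, |η i| < T i)
    (hℓ : ∀ i < ℓ, c i + η i < T i) (hi₀ℓ : i₀ ≤ ℓ) :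
    |∑ i ∈ univ.filter (ℓ ≤ ·), (c i + η i) - ∑ i, c i| ≤
      ∑ i, if i₀ ≤ i then 2 * T i else 0 := by
  have hsplit : ∑ i ∈ univ.filter (ℓ ≤ ·), (c i + η i) - ∑ i, c i =
      ∑ i, if ℓ ≤ i then η i else -c i := by
    rw [Finset.sum_filter, ← Finset.sum_sub_distrib]
    exact Finset.sum_congr rfl fun i _ => by split_ifs <;> ring
  rw [hsplit]
  refine (Finset.abs_sum_le_sum_abs _ _).trans (Finset.sum_le_sum fun i _ => ?_)
  have hηi := abs_lt.1 (hη i)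
  split_ifs with hℓi hi₀i hi₀i
  · linarith [hη i]
  · exact absurd (hi₀ℓ.trans hℓi) hi₀i
  · rw [abs_neg, abs_of_nonneg (hc i)]
    linarith [hℓ i (lt_of_not_ge hℓi)]
  · simp [hc₀ i (lt_of_not_ge hi₀i)]

theorem exists_stopIndex_of_forall_abs_lt {L : ℕ} (hL : 1 ≤ L) {c : Fin L → ℕ}
    {η T : Fin L → ℝ} {i₀ : Fin L} (hη : ∀ i, |η i| < T i) (hc₀ : ∀ i < i₀, c i = 0) :
    ∃ ℓ : Fin L, ((T ℓ ≤ (c ℓ : ℝ) + η ℓ ∧ ∀ i, i < ℓ → (c i : ℝ) + η i < T i) ∨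
        ((ℓ : ℕ) = L - 1 ∧ ∀ i, (c i : ℝ) + η i < T i)) ∧ i₀ ≤ ℓ ∧
      |∑ i ∈ univ.filter (ℓ ≤ ·), ((c i : ℝ) + η i) - ∑ i, (c i : ℝ)| ≤
        ∑ i, if i₀ ≤ i then 2 * T i else 0 := by
  obtain ⟨ℓ, hℓ⟩ := Fin.exists_first_or_last hL fun i => T i ≤ c i + η i
  simp only [not_le] at hℓ
  have hi₀ℓ : i₀ ≤ ℓ := by
    rcases hℓ with ⟨hTℓ, -⟩ | ⟨hℓL, -⟩
    · by_contra! hℓi₀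
      have hcℓ : (c ℓ : ℝ) = 0 := by exact_mod_cast hc₀ ℓ hℓi₀
      linarith [(abs_lt.1 (hη ℓ)).2]
    · exact Fin.le_def.2 (by omega)
  have hbelow : ∀ i < ℓ, (c i : ℝ) + η i < T i := by
    rcases hℓ with ⟨-, h⟩ | ⟨-, h⟩
    exacts [h, fun i _ => h i]
  exact ⟨ℓ, hℓ, hi₀ℓ, abs_sum_filter_sub_sum_le (fun i => Nat.cast_nonneg _)
    (fun i hi => by simp [hc₀ i hi]) hη hbelow hi₀ℓ⟩

theorem sum_tail_thresholds_le {L : ℕ} {K ε εmin : ℝ} (hK : 0 ≤ K) (hε : 0 < ε)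
    (hεmin : 0 < εmin) {i₀ : Fin L} (hi₀ : εmin ≤ 2 ^ ((i₀ : ℕ) + 1) * ε) :
    ∑ i : Fin L, (if i₀ ≤ i then 2 * (K / (2 ^ (i : ℕ) * ε)) else 0) ≤ 8 * K / εmin := by
  calc ∑ i : Fin L, (if i₀ ≤ i then 2 * (K / (2 ^ (i : ℕ) * ε)) else 0)
      = 2 * K / ε * ∑ i : Fin L, if i₀ ≤ i then (2⁻¹ : ℝ) ^ (i : ℕ) else 0 := by
        rw [Finset.mul_sum]
        refine Finset.sum_congr rfl fun i _ => ?_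
        split_ifs
        · rw [inv_pow]; field_simp
        · simp
    _ ≤ 2 * K / ε * (2 * 2⁻¹ ^ (i₀ : ℕ)) := by gcongr; exact sum_ite_le_inv_two_pow i₀
    _ = 8 * K / (2 ^ ((i₀ : ℕ) + 1) * ε) := by rw [inv_pow]; field_simp; ring
    _ ≤ 8 * K / εmin := by gcongr

theorem prdp_count_utility_general {X : Type*}
    (εcheck εhat : ℝ) (hεcheck : 0 < εcheck)
    (E : X → ℝ) (hE : ∀ r, E r ∈ Set.Icc εcheck εhat)
    (D : Multiset X)
    (εmin : ℝ) (hεmin1 : ∀ r ∈ D, εmin ≤ E r) (hεmin2 : ∃ r ∈ D, E r = εmin)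
    (L : ℕ) (hL : 1 ≤ L) (hLdef : (L : ℤ) = ⌈Real.logb 2 (εhat / εcheck)⌉)
    (c : Fin L → ℕ)
    (hc : ∀ i : Fin L, c i =
      Multiset.card (@Multiset.filter X
        (fun r => if (i : ℕ) = 0 then E r ∈ Set.Icc εcheck (2 * εcheck)
          else E r ∈ Set.Ioc (2 ^ (i : ℕ) * εcheck) (2 ^ ((i : ℕ) + 1) * εcheck))
        (Classical.decPred _) D))
    (β : ℝ) (hβ : β ∈ Set.Ioo (0 : ℝ) 1)
    (T : Fin L → ℝ) (hT : ∀ i, T i = Real.log (L / β) / (2 ^ (i : ℕ) * εcheck)) :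
    ENNReal.ofReal (1 - β) ≤
      (Measure.pi fun i : Fin L => laplace 0 (1 / (2 ^ (i : ℕ) * εcheck)))
        {η : Fin L → ℝ | ∃ ℓ : Fin L,
          ((T ℓ ≤ (c ℓ : ℝ) + η ℓ ∧ ∀ i, i < ℓ → (c i : ℝ) + η i < T i) ∨
            ((ℓ : ℕ) = L - 1 ∧ ∀ i, (c i : ℝ) + η i < T i)) ∧
          εmin / 2 ≤ 2 ^ (ℓ : ℕ) * εcheck ∧
          |(∑ i ∈ Finset.univ.filter (fun i => ℓ ≤ i), ((c i : ℝ) + η i)) -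
              (Multiset.card D : ℝ)| ≤ 12 * Real.log (L / β) / εmin} := by
  obtain ⟨hβ₀, hβ₁⟩ := hβ
  obtain ⟨r₀, -, rfl⟩ := hεmin2
  have hE' (r : X) : εcheck ≤ E r ∧ E r ≤ 2 ^ L * εcheck :=
    ⟨(hE r).1, (hE r).2.trans (le_two_pow_mul_of_ceil_logb_le hεcheck hLdef.ge)⟩
  obtain ⟨i₀, hi₀, -⟩ := existsUnique_inDyadicDomain hεcheck.le hL (hE' r₀).1 (hE' r₀).2
  have hc₀ : ∀ i < i₀, c i = 0 := fun i hi => by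
    rw [hc i]
    exact Multiset.card_eq_zero.2 (filter_inDyadicDomain_eq_zero hεcheck.le hi₀ hi hεmin1)
  have hcard : Multiset.card D = ∑ i, c i := by
    simp only [hc]
    exact card_eq_sum_card_filter_inDyadicDomain hεcheck.le hL hE' D
  have : Nonempty (Fin L) := ⟨⟨0, hL⟩⟩
  refine (ofReal_one_sub_le_pi_laplace_univ_pi_Ioo_neg (T := T) hβ₀ hβ₁.le
    (fun i => by positivity) fun i => by rw [hT, Fintype.card_fin]; ring).trans
    (measure_mono fun η hη => ?_)
  obtain ⟨ℓ, hsel, hi₀ℓ, herr⟩ :=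
    exists_stopIndex_of_forall_abs_lt hL (fun i => abs_lt.2 (hη i trivial)) hc₀
  have hK : 0 ≤ log (L / β) :=
    log_nonneg (by rw [le_div_iff₀ hβ₀]; linarith [(Nat.one_le_cast.2 hL : (1 : ℝ) ≤ L)])
  refine ⟨ℓ, hsel, ?_, ?_⟩
  · calc E r₀ / 2 ≤ 2 ^ ((i₀ : ℕ) + 1) * εcheck / 2 := by linarith [hi₀.le_two_pow_succ_mul]
      _ = 2 ^ (i₀ : ℕ) * εcheck := by ring
      _ ≤ 2 ^ (ℓ : ℕ) * εcheck := by gcongr; exacts [one_le_two, hi₀ℓ]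
  · have hεmin : 0 < E r₀ := hεcheck.trans_le (hE r₀).1
    rw [hcard, Nat.cast_sum]
    calc _ ≤ _ := herr
      _ ≤ 8 * log (L / β) / E r₀ := by
        simp only [hT]
        exact sum_tail_thresholds_le hK hεcheck hεmin hi₀.le_two_pow_succ_mul
      _ ≤ 12 * log (L / β) / E r₀ := by gcongr; norm_num

/-- Utility of Algorithm 1 (PrDP Count). Domains are indexed by `i : Fin L` (0-based, so
index `i` corresponds to the paper's domain `i+1`): `c i` counts the records `r` of `D` with
`E r ∈ (2^i·ε̌, 2^(i+1)·ε̌]` (and `E r ∈ [ε̌, 2·ε̌]` for `i = 0`), the noise on domain `i` is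
`Lap(0, 1/(2^i·ε̌))`, the threshold is `T i = ln(L/β)/(2^i·ε̌)`, `ℓ(η)` is the least index
whose noisy count passes its threshold (or the last index `L-1` if none does),
`ε_τ(η) = 2^(ℓ(η))·ε̌` and `Q̃(η) = ∑_{i ≥ ℓ(η)} (c i + η i)`. With probability at least
`1 − β` over `η`, we have `ε_τ(η) ≥ ε_min/2` and `|Q̃(η) − |D|| ≤ 12·ln(L/β)/ε_min`. -/
theorem prdp_count_utility {X : Type*} [Countable X]
    (εcheck εhat : ℝ) (hεcheck : 0 < εcheck) (hεhat : εcheck ≤ εhat)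
    (E : X → ℝ) (hE : ∀ r, E r ∈ Set.Icc εcheck εhat)
    (D : Multiset X) (hD : D ≠ 0)
    (εmin : ℝ) (hεmin1 : ∀ r ∈ D, εmin ≤ E r) (hεmin2 : ∃ r ∈ D, E r = εmin)
    (L : ℕ) (hL : 1 ≤ L) (hLdef : (L : ℤ) = ⌈Real.logb 2 (εhat / εcheck)⌉)
    (c : Fin L → ℕ)
    (hc : ∀ i : Fin L, c i =
      Multiset.card (@Multiset.filter X
        (fun r => if (i : ℕ) = 0 then E r ∈ Set.Icc εcheck (2 * εcheck)
          else E r ∈ Set.Ioc (2 ^ (i : ℕ) * εcheck) (2 ^ ((i : ℕ) + 1) * εcheck))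
        (Classical.decPred _) D))
    (β : ℝ) (hβ : β ∈ Set.Ioo (0 : ℝ) 1)
    (T : Fin L → ℝ) (hT : ∀ i, T i = Real.log (L / β) / (2 ^ (i : ℕ) * εcheck)) :
    ENNReal.ofReal (1 - β) ≤
      (Measure.pi fun i : Fin L => laplace 0 (1 / (2 ^ (i : ℕ) * εcheck)))
        {η : Fin L → ℝ | ∃ ℓ : Fin L,
          ((T ℓ ≤ (c ℓ : ℝ) + η ℓ ∧ ∀ i, i < ℓ → (c i : ℝ) + η i < T i) ∨
            ((ℓ : ℕ) = L - 1 ∧ ∀ i, (c i : ℝ) + η i < T i)) ∧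
          εmin / 2 ≤ 2 ^ (ℓ : ℕ) * εcheck ∧
          |(∑ i ∈ Finset.univ.filter (fun i => ℓ ≤ i), ((c i : ℝ) + η i)) -
              (Multiset.card D : ℝ)| ≤ 12 * Real.log (L / β) / εmin} :=
  prdp_count_utility_general εcheck εhat hεcheck E hE D εmin hεmin1 hεmin2 L hL hLdef c hc β hβ T hT
end

section
/- (Privacy of the PrLDP randomizer, Algorithm 3.) Let X be a countable type, ε̌, ε̂ > 0 with ε̌ ≤ ε̂, let E : X → [ε̌, ε̂] be a privacy budget function, and let L = ⌈log₂(ε̂/ε̌)⌉ (with L ≥ 1). For a record r ∈ X, let q_i(r) ∈ {0,1} be the indicator that E(r) ∈ (2^{i−1}·ε̌, 2^i·ε̌] for i ≥ 2 and that E(r) ∈ [ε̌, 2·ε̌] for i = 1, and define μ_r = Lap(q₁(r), 1/(2^0·ε̌)) ⊗ ⋯ ⊗ Lap(q_L(r), 1/(2^{L−1}·ε̌)) and μ_⊥ = Lap(0, 1/(2^0·ε̌)) ⊗ ⋯ ⊗ Lap(0, 1/(2^{L−1}·ε̌)), both product measures on ℝ^L. Then for every r ∈ X and every Borel set S ⊆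 ℝ^L: exp(−E(r))·μ_⊥(S) ≤ μ_r(S) ≤ exp(E(r))·μ_⊥(S). -/
open MeasureTheory

/-!
Moving the centre of a Laplace density of scale `b` from `a'` to `a` multiplies it by at most
`exp (|a - a'| / b)` (triangle inequality), so the product densities of `μ_r` and `μ_⊥` are within a
factor `exp (∑ i, |q r i| · 2^i ε̌)` of each other, in both directions. The budget domains are
disjoint, so at most one `q r i` is nonzero, and for that one `2^i ε̌ ≤ E r` because `2^i ε̌` is the
left end of the domain containing `E r`.
-/

open Set ENNReal Finset Function

namespace MeasureTheory

theorem lintegral_fin_nat_prod_eq_prod {α : Type*} [MeasurableSpace α] {n : ℕ}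
    {μ : Fin n → Measure α} [∀ i, SigmaFinite (μ i)]
    {f : Fin n → α → ℝ≥0∞} (hf : ∀ i, Measurable (f i)) :
    ∫⁻ x : Fin n → α, ∏ i, f i (x i) ∂(Measure.pi μ) = ∏ i, ∫⁻ x, f i x ∂(μ i) := by
  induction n with
  | zero => simp
  | succ n ih =>
    calc
      _ = ∫⁻ x : α × (Fin n → α), f 0 x.1 * ∏ i : Fin n, f i.succ (x.2 i)
            ∂(μ 0).prod (Measure.pi fun i => μ i.succ) := by
        rw [← ((measurePreserving_piFinSuccAbove μ 0).symm).lintegral_comp (by fun_prop)]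
        simp_rw [MeasurableEquiv.piFinSuccAbove_symm_apply, Fin.insertNthEquiv,
          Fin.prod_univ_succ, Fin.insertNth_zero, Equiv.coe_fn_mk, Fin.cons_succ,
          Fin.zero_succAbove, cast_eq, Fin.cons_zero]
      _ = (∫⁻ x, f 0 x ∂μ 0) * ∏ i : Fin n, ∫⁻ x, f i.succ x ∂(μ i.succ) := by
        have htail : Measurable fun y : Fin n → α => ∏ i : Fin n, f i.succ (y i) :=
          Finset.measurable_prod _ fun i _ => (hf i.succ).comp (measurable_pi_apply i)
        rw [← ih fun i => hf i.succ, ← lintegral_prod_mul (hf 0).aemeasurable htail.aemeasurable]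
      _ = ∏ i, ∫⁻ x, f i x ∂(μ i) := by rw [Fin.prod_univ_succ]

theorem lintegral_fintype_prod_eq_prod {α ι : Type*} [MeasurableSpace α] [Fintype ι]
    {μ : ι → Measure α} [∀ i, SigmaFinite (μ i)]
    {f : ι → α → ℝ≥0∞} (hf : ∀ i, Measurable (f i)) :
    ∫⁻ x : ι → α, ∏ i, f i (x i) ∂(Measure.pi μ) = ∏ i, ∫⁻ x, f i x ∂(μ i) := by
  let e := (Fintype.equivFin ι).symm
  rw [← (measurePreserving_piCongrLeft _ e).lintegral_comp (by fun_prop)]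
  simp_rw [← e.prod_comp, MeasurableEquiv.coe_piCongrLeft, Equiv.piCongrLeft_apply_apply]
  exact lintegral_fin_nat_prod_eq_prod (f := fun i => f (e i)) fun i => hf (e i)

theorem Measure.pi_withDensity {α ι : Type*} [MeasurableSpace α] [Fintype ι]
    {μ : ι → Measure α} [∀ i, SigmaFinite (μ i)] {f : ι → α → ℝ≥0∞}
    [∀ i, SigmaFinite ((μ i).withDensity (f i))] (hf : ∀ i, Measurable (f i)) :
    Measure.pi (fun i => (μ i).withDensity (f i)) =
      (Measure.pi μ).withDensity fun x => ∏ i, f i (x i) := by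
  refine Measure.pi_eq (μ := fun i => (μ i).withDensity (f i)) fun s hs => ?_
  have hind : (Set.univ.pi s).indicator (fun x => ∏ i, f i (x i)) =
      fun x => ∏ i, (s i).indicator (f i) (x i) := by
    ext x
    classical
    simp [Set.indicator_apply, Finset.prod_ite_zero]
  rw [withDensity_apply _ (.univ_pi hs), ← lintegral_indicator (.univ_pi hs), hind,
    lintegral_fintype_prod_eq_prod fun i => (hf i).indicator (hs i)]
  simp_rw [lintegral_indicator (hs _), withDensity_apply _ (hs _)]

theorem Measure.pi_withDensity_le_smul {α ι : Type*} [MeasurableSpace α] [Fintype ι]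
    {μ : ι → Measure α} [∀ i, SigmaFinite (μ i)] {f g : ι → α → ℝ≥0∞}
    [∀ i, SigmaFinite ((μ i).withDensity (f i))] [∀ i, SigmaFinite ((μ i).withDensity (g i))]
    (hf : ∀ i, Measurable (f i)) (hg : ∀ i, Measurable (g i)) {c : ι → ℝ≥0∞}
    (hfg : ∀ i x, f i x ≤ c i * g i x) :
    Measure.pi (fun i => (μ i).withDensity (f i)) ≤
      (∏ i, c i) • Measure.pi (fun i => (μ i).withDensity (g i)) := by
  have hprod : Measurable fun x : ι → α => ∏ i, g i (x i) :=
    Finset.measurable_prod _ fun i _ => (hg i).comp (measurable_pi_apply i)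
  rw [Measure.pi_withDensity hf, Measure.pi_withDensity hg, ← withDensity_smul _ hprod]
  refine withDensity_mono (.of_forall fun x => ?_)
  calc ∏ i, f i (x i) ≤ ∏ i, c i * g i (x i) := Finset.prod_le_prod' fun i _ => hfg i (x i)
    _ = (∏ i, c i) * ∏ i, g i (x i) := Finset.prod_mul_distrib

end MeasureTheory

noncomputable def laplacePDF (a b x : ℝ) : ℝ := 1 / (2 * b) * Real.exp (-|x - a| / b)

theorem laplace_eq_withDensity (a b : ℝ) :
    laplace a b = volume.withDensity fun x => ENNReal.ofReal (laplacePDF a b x) := rfl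

theorem measurable_laplacePDF (a b : ℝ) : Measurable (laplacePDF a b) := by
  unfold laplacePDF; fun_prop

theorem laplacePDF_le {b : ℝ} (hb : 0 < b) (a a' x : ℝ) :
    laplacePDF a b x ≤ Real.exp (|a - a'| / b) * laplacePDF a' b x := by
  rw [laplacePDF, laplacePDF, mul_left_comm, ← Real.exp_add]
  gcongr
  rw [← add_div]
  exact div_le_div_of_nonneg_right (by linarith [abs_sub_le x a a']) hb.le

theorem pi_laplace_le_smul {ι : Type*} [Fintype ι] {b : ι → ℝ} (hb : ∀ i, 0 < b i)
    {a a' : ι → ℝ} {t : ℝ} (ht : ∑ i, |a i - a' i| / b i ≤ t) :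
    Measure.pi (fun i => laplace (a i) (b i)) ≤
      ENNReal.ofReal (Real.exp t) • Measure.pi (fun i => laplace (a' i) (b i)) := by
  have hscale :
      ∏ i, ENNReal.ofReal (Real.exp (|a i - a' i| / b i)) ≤ ENNReal.ofReal (Real.exp t) := by
    rw [← ENNReal.ofReal_prod_of_nonneg fun i _ => (Real.exp_pos _).le, ← Real.exp_sum]
    gcongr
  simp only [laplace_eq_withDensity]
  refine (Measure.pi_withDensity_le_smul
    (g := fun i x => ENNReal.ofReal (laplacePDF (a' i) (b i) x))
    (c := fun i => ENNReal.ofReal (Real.exp (|a i - a' i| / b i)))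
    (fun i => (measurable_laplacePDF _ _).ennreal_ofReal)
    (fun i => (measurable_laplacePDF _ _).ennreal_ofReal) fun i x => ?_).trans fun s => ?_
  · rw [← ENNReal.ofReal_mul (Real.exp_pos _).le]
    exact ENNReal.ofReal_le_ofReal (laplacePDF_le (hb i) _ _ _)
  · simp only [Measure.smul_apply, smul_eq_mul]
    gcongr

theorem Finset.sum_indicator_le_of_pairwise_disjoint {ι α M : Type*} [AddCommMonoid M]
    [Preorder M] {D : ι → Set α} (hD : Pairwise (Disjoint on D)) (s : Finset ι)
    {f : ι → α → M} {x : α} {y : M} (hf : ∀ i, x ∈ D i → f i x ≤ y) (hy : 0 ≤ y) :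
    ∑ i ∈ s, (D i).indicator (f i) x ≤ y := by
  by_cases h : ∃ i ∈ s, x ∈ D i
  · obtain ⟨i, hi, hxi⟩ := h
    rw [Finset.sum_eq_single_of_mem i hi fun j _ hji =>
      indicator_of_notMem (fun hxj => (hD hji).ne_of_mem hxj hxi rfl) _, indicator_of_mem hxi]
    exact hf i hxi
  · simp only [not_exists, not_and] at h
    rw [Finset.sum_eq_zero fun i hi => indicator_of_notMem (h i hi) _]
    exact hy

/-- The paper's `(i + 1)`-st privacy-budget domain. -/
def budgetDomain (ε : ℝ) (i : ℕ) : Set ℝ :=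
  if i = 0 then Icc ε (2 * ε) else Ioc (2 ^ i * ε) (2 ^ (i + 1) * ε)

theorem mem_budgetDomain {ε x : ℝ} {i : ℕ} : x ∈ budgetDomain ε i ↔
    if i = 0 then x ∈ Icc ε (2 * ε) else x ∈ Ioc (2 ^ i * ε) (2 ^ (i + 1) * ε) := by
  unfold budgetDomain; split_ifs <;> rfl

theorem budgetDomain_subset_Icc (ε : ℝ) (i : ℕ) :
    budgetDomain ε i ⊆ Icc (2 ^ i * ε) (2 ^ (i + 1) * ε) := by
  unfold budgetDomain
  split_ifs with hi
  · simp [hi]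
  · exact Ioc_subset_Icc_self

theorem budgetDomain_subset_Ioi (ε : ℝ) {i : ℕ} (hi : i ≠ 0) :
    budgetDomain ε i ⊆ Ioi (2 ^ i * ε) := by
  simp only [budgetDomain, if_neg hi]
  exact Ioc_subset_Ioi_self

theorem pairwise_disjoint_budgetDomain {ε : ℝ} (hε : 0 ≤ ε) :
    Pairwise (Disjoint on budgetDomain ε) := by
  refine (pairwise_disjoint_on _).2 fun i j hij => ?_
  have hle : (2 : ℝ) ^ (i + 1) * ε ≤ 2 ^ j * ε := by gcongr <;> [norm_num; omega]
  exact (Iic_disjoint_Ioi hle).mono ((budgetDomain_subset_Icc ε i).trans Icc_subset_Iic_self)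
    (budgetDomain_subset_Ioi ε (by omega))

theorem prldp_randomizer_privacy_general {X : Type*}
    (εcheck εhat : ℝ) (hεcheck : 0 < εcheck)
    (E : X → ℝ) (hE : ∀ r, E r ∈ Set.Icc εcheck εhat)
    (L : ℕ)
    (q : X → Fin L → ℝ)
    (hq1 : ∀ (r : X) (i : Fin L),
      (if (i : ℕ) = 0 then E r ∈ Set.Icc εcheck (2 * εcheck)
        else E r ∈ Set.Ioc (2 ^ (i : ℕ) * εcheck) (2 ^ ((i : ℕ) + 1) * εcheck)) →
      q r i = 1)
    (hq0 : ∀ (r : X) (i : Fin L),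
      ¬(if (i : ℕ) = 0 then E r ∈ Set.Icc εcheck (2 * εcheck)
        else E r ∈ Set.Ioc (2 ^ (i : ℕ) * εcheck) (2 ^ ((i : ℕ) + 1) * εcheck)) →
      q r i = 0)
    (r : X) (S : Set (Fin L → ℝ)) :
    ENNReal.ofReal (Real.exp (-(E r))) *
        (Measure.pi fun i : Fin L => laplace 0 (1 / (2 ^ (i : ℕ) * εcheck))) S ≤
      (Measure.pi fun i : Fin L => laplace (q r i) (1 / (2 ^ (i : ℕ) * εcheck))) S ∧
    (Measure.pi fun i : Fin L => laplace (q r i) (1 / (2 ^ (i : ℕ) * εcheck))) S ≤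
      ENNReal.ofReal (Real.exp (E r)) *
        (Measure.pi fun i : Fin L => laplace 0 (1 / (2 ^ (i : ℕ) * εcheck))) S := by
  have hb : ∀ i : Fin L, 0 < 1 / (2 ^ (i : ℕ) * εcheck) := fun i => by positivity
  have hterm : ∀ i : Fin L, |q r i| / (1 / (2 ^ (i : ℕ) * εcheck)) =
      (budgetDomain εcheck i).indicator (fun _ => 2 ^ (i : ℕ) * εcheck) (E r) := by
    intro i
    by_cases h : E r ∈ budgetDomain εcheck i
    · rw [hq1 r i (mem_budgetDomain.1 h), indicator_of_mem h]; simp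
    · rw [hq0 r i (mt mem_budgetDomain.2 h), indicator_of_notMem h]; simp
  have hcost : ∑ i : Fin L, |q r i| / (1 / (2 ^ (i : ℕ) * εcheck)) ≤ E r := by
    simp only [hterm]
    exact Finset.sum_indicator_le_of_pairwise_disjoint
      ((pairwise_disjoint_budgetDomain hεcheck.le).comp_of_injective Fin.val_injective) _
      (fun i hi => (budgetDomain_subset_Icc εcheck i hi).1) (hεcheck.le.trans (hE r).1)
  have hup := pi_laplace_le_smul hb (a := q r) (a' := fun _ => 0) (by simpa using hcost)
  have hdown := pi_laplace_le_smul hb (a := fun _ => 0) (a' := q r) (by simpa using hcost)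
  refine ⟨?_, by simpa only [Measure.smul_apply, smul_eq_mul] using hup S⟩
  calc _ ≤ ENNReal.ofReal (Real.exp (-(E r))) * (ENNReal.ofReal (Real.exp (E r)) *
        (Measure.pi fun i : Fin L => laplace (q r i) (1 / (2 ^ (i : ℕ) * εcheck))) S) := by
        gcongr
        simpa only [Measure.smul_apply, smul_eq_mul] using hdown S
    _ = _ := by
      rw [← mul_assoc, ← ENNReal.ofReal_mul (Real.exp_pos _).le, ← Real.exp_add, neg_add_cancel,
        Real.exp_zero, ENNReal.ofReal_one, one_mul]

/-- Privacy of the PrLDP randomizer (Algorithm 3). Domains are indexed by `i : Fin L`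
(0-based, so index `i` corresponds to the paper's domain `i+1`): `q r i ∈ {0,1}` indicates
whether `E r ∈ (2^i·ε̌, 2^(i+1)·ε̌]` (with `E r ∈ [ε̌, 2·ε̌]` for `i = 0`). The randomizer's
output distribution on input `r` is `μ_r = ⊗_i Lap(q r i, 1/(2^i·ε̌))`, and on the dummy
record `⊥` (which belongs to no domain) it is `μ_⊥ = ⊗_i Lap(0, 1/(2^i·ε̌))`. Then for
every record `r` and Borel `S ⊆ ℝ^L`, `exp(−E r)·μ_⊥(S) ≤ μ_r(S) ≤ exp(E r)·μ_⊥(S)`. -/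
theorem prldp_randomizer_privacy {X : Type*} [Countable X]
    (εcheck εhat : ℝ) (hεcheck : 0 < εcheck) (hεhat : εcheck ≤ εhat)
    (E : X → ℝ) (hE : ∀ r, E r ∈ Set.Icc εcheck εhat)
    (L : ℕ) (hL : 1 ≤ L) (hLdef : (L : ℤ) = ⌈Real.logb 2 (εhat / εcheck)⌉)
    (q : X → Fin L → ℝ)
    (hq1 : ∀ (r : X) (i : Fin L),
      (if (i : ℕ) = 0 then E r ∈ Set.Icc εcheck (2 * εcheck)
        else E r ∈ Set.Ioc (2 ^ (i : ℕ) * εcheck) (2 ^ ((i : ℕ) + 1) * εcheck)) →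
      q r i = 1)
    (hq0 : ∀ (r : X) (i : Fin L),
      ¬(if (i : ℕ) = 0 then E r ∈ Set.Icc εcheck (2 * εcheck)
        else E r ∈ Set.Ioc (2 ^ (i : ℕ) * εcheck) (2 ^ ((i : ℕ) + 1) * εcheck)) →
      q r i = 0)
    (r : X) (S : Set (Fin L → ℝ)) (hS : MeasurableSet S) :
    ENNReal.ofReal (Real.exp (-(E r))) *
        (Measure.pi fun i : Fin L => laplace 0 (1 / (2 ^ (i : ℕ) * εcheck))) S ≤
      (Measure.pi fun i : Fin L => laplace (q r i) (1 / (2 ^ (i : ℕ) * εcheck))) S ∧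
    (Measure.pi fun i : Fin L => laplace (q r i) (1 / (2 ^ (i : ℕ) * εcheck))) S ≤
      ENNReal.ofReal (Real.exp (E r)) *
        (Measure.pi fun i : Fin L => laplace 0 (1 / (2 ^ (i : ℕ) * εcheck))) S :=
  prldp_randomizer_privacy_general εcheck εhat hεcheck E hE L q hq1 hq0 r S
end

section
/- (Deterministic error bound for the naive PrDP sum-estimation extension, Theorem A.1.) Let β ∈ (0, 1), L ∈ ℕ with L ≥ 1, let s₁, …, s_L > 0 be noise scales, and define thresholds T_i = s_i·ln(L/β) for i = 1, …, L. Let v₁, …, v_L ≥ 0 be reals (the per-domain sums) and η₁, …, η_L ∈ ℝ with |η_i| ≤ T_i for all i. Define ℓ as the least index i ∈ {1, …, L} with v_i + η_i ≥ T_i if such an index exists, and ℓ = L otherwise. Then |Σ_{i=ℓ}^{L} (v_i + η_i) − Σ_{i=1}^{L} v_i| ≤ Σ_{i < ℓ, v_i > 0} 2·s_i·ln(L/β) + Σ_{i=ℓ}^{L} s_i·ln(L/β). -/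
/-!
Every domain before the stopping index `ℓ` failed its threshold, so there `v i < T i - η i ≤ 2 T i`,
and the domains with `v i = 0` contribute nothing. The output misses exactly these sums and adds
the noise of the domains from `ℓ` on, each bounded by its threshold.
-/

open Finset

theorem Finset.sum_Ico_add_sum_Icc {M : Type*} [AddCommMonoid M] (f : ℕ → M) {a b c : ℕ}
    (hab : a ≤ b) (hbc : b ≤ c + 1) :
    ∑ i ∈ Ico a b, f i + ∑ i ∈ Icc b c, f i = ∑ i ∈ Icc a c, f i := by
  simp only [← Ico_add_one_right_eq_Icc]
  exact sum_Ico_consecutive f hab hbc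

section NoisySum

variable {ι : Type*} {v η T : ι → ℝ}

theorem sum_le_sum_filter_pos_two_mul_of_add_lt (A : Finset ι) (hv : ∀ i ∈ A, 0 ≤ v i)
    (hη : ∀ i ∈ A, |η i| ≤ T i) (hbelow : ∀ i ∈ A, v i + η i < T i) :
    ∑ i ∈ A, v i ≤ ∑ i ∈ A.filter (fun i => 0 < v i), 2 * T i := by
  rw [← sum_filter_of_ne fun i hi hne => (hv i hi).lt_of_ne' hne]
  refine sum_le_sum fun i hi => ?_
  have hiA := (mem_filter.mp hi).1
  linarith [hbelow i hiA, hη i hiA, neg_le_abs (η i)]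

theorem abs_sum_add_sub_sum_add_sum_le (A B : Finset ι) (hv : ∀ i ∈ A, 0 ≤ v i)
    (hηA : ∀ i ∈ A, |η i| ≤ T i) (hηB : ∀ i ∈ B, |η i| ≤ T i)
    (hbelow : ∀ i ∈ A, v i + η i < T i) :
    |∑ i ∈ B, (v i + η i) - (∑ i ∈ A, v i + ∑ i ∈ B, v i)| ≤
      ∑ i ∈ A.filter (fun i => 0 < v i), 2 * T i + ∑ i ∈ B, T i := by
  have hnoise : |∑ i ∈ B, η i| ≤ ∑ i ∈ B, T i :=
    (abs_sum_le_sum_abs _ _).trans (sum_le_sum hηB)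
  have hmissed := sum_le_sum_filter_pos_two_mul_of_add_lt A hv hηA hbelow
  have hmissed_nonneg : 0 ≤ ∑ i ∈ A, v i := sum_nonneg hv
  rw [sum_add_distrib, abs_le]
  constructor <;> linarith [abs_le.mp hnoise]

end NoisySum

theorem prdp_sum_extension_error_bound_general
    (β : ℝ)
    (L : ℕ)
    (s : ℕ → ℝ)
    (T : ℕ → ℝ) (hT : ∀ i ∈ Finset.Icc 1 L, T i = s i * Real.log (L / β))
    (v η : ℕ → ℝ)
    (hv : ∀ i ∈ Finset.Icc 1 L, 0 ≤ v i)
    (hη : ∀ i ∈ Finset.Icc 1 L, |η i| ≤ T i)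
    (ℓ : ℕ) (hℓmem : ℓ ∈ Finset.Icc 1 L)
    (hℓ : (T ℓ ≤ v ℓ + η ℓ ∧ ∀ i ∈ Finset.Icc 1 L, i < ℓ → v i + η i < T i) ∨
          (ℓ = L ∧ ∀ i ∈ Finset.Icc 1 L, v i + η i < T i)) :
    |(∑ i ∈ Finset.Icc ℓ L, (v i + η i)) - ∑ i ∈ Finset.Icc 1 L, v i| ≤
      (∑ i ∈ (Finset.Icc 1 (ℓ - 1)).filter (fun i => 0 < v i), 2 * s i * Real.log (L / β)) +
        ∑ i ∈ Finset.Icc ℓ L, s i * Real.log (L / β) := by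
  obtain ⟨hℓ1, hℓL⟩ := mem_Icc.mp hℓmem
  have hbelow : ∀ i ∈ Icc 1 L, i < ℓ → v i + η i < T i :=
    hℓ.elim (fun h => h.2) fun h i hi _ => h.2 i hi
  have hhead : ∀ i ∈ Icc 1 (ℓ - 1), i ∈ Icc 1 L ∧ i < ℓ := fun i hi => by
    simp only [mem_Icc] at hi ⊢; omega
  have htail : ∀ i ∈ Icc ℓ L, i ∈ Icc 1 L := fun i hi => by
    simp only [mem_Icc] at hi ⊢; omega
  have hsplit : ∑ i ∈ Icc 1 L, v i = ∑ i ∈ Icc 1 (ℓ - 1), v i + ∑ i ∈ Icc ℓ L, v i := by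
    have hℓmin : ¬IsMin ℓ := by simp only [isMin_iff_eq_bot, Nat.bot_eq_zero]; omega
    rw [Icc_sub_one_right_eq_Ico_of_not_isMin hℓmin, sum_Ico_add_sum_Icc v hℓ1 (by omega)]
  rw [hsplit]
  refine (abs_sum_add_sub_sum_add_sum_le _ _ (fun i hi => hv i (hhead i hi).1)
    (fun i hi => hη i (hhead i hi).1) (fun i hi => hη i (htail i hi))
    fun i hi => hbelow i (hhead i hi).1 (hhead i hi).2).trans_eq ?_
  congr 1 <;> refine sum_congr rfl fun i hi => ?_
  · rw [hT i (hhead i (mem_filter.mp hi).1).1, mul_assoc]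
  · rw [hT i (htail i hi)]

/-- Deterministic error bound for the naive PrDP sum-estimation extension (Theorem A.1):
with noise scales `s i > 0`, thresholds `T i = s i · ln(L/β)`, per-domain sums `v i ≥ 0`,
and noises `|η i| ≤ T i`, if `ℓ` is the least index `i ∈ {1,…,L}` with `v i + η i ≥ T i`
when such an index exists and `ℓ = L` otherwise, then
`|∑_{i=ℓ}^{L} (v i + η i) − ∑_{i=1}^{L} v i|
  ≤ ∑_{i < ℓ, v i > 0} 2·s i·ln(L/β) + ∑_{i=ℓ}^{L} s i·ln(L/β)`. -/
theorem prdp_sum_extension_error_bound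
    (β : ℝ) (hβ : β ∈ Set.Ioo (0 : ℝ) 1)
    (L : ℕ) (hL : 1 ≤ L)
    (s : ℕ → ℝ) (hs : ∀ i ∈ Finset.Icc 1 L, 0 < s i)
    (T : ℕ → ℝ) (hT : ∀ i ∈ Finset.Icc 1 L, T i = s i * Real.log (L / β))
    (v η : ℕ → ℝ)
    (hv : ∀ i ∈ Finset.Icc 1 L, 0 ≤ v i)
    (hη : ∀ i ∈ Finset.Icc 1 L, |η i| ≤ T i)
    (ℓ : ℕ) (hℓmem : ℓ ∈ Finset.Icc 1 L)
    (hℓ : (T ℓ ≤ v ℓ + η ℓ ∧ ∀ i ∈ Finset.Icc 1 L, i < ℓ → v i + η i < T i) ∨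
          (ℓ = L ∧ ∀ i ∈ Finset.Icc 1 L, v i + η i < T i)) :
    |(∑ i ∈ Finset.Icc ℓ L, (v i + η i)) - ∑ i ∈ Finset.Icc 1 L, v i| ≤
      (∑ i ∈ (Finset.Icc 1 (ℓ - 1)).filter (fun i => 0 < v i), 2 * s i * Real.log (L / β)) +
        ∑ i ∈ Finset.Icc ℓ L, s i * Real.log (L / β) :=
  prdp_sum_extension_error_bound_general β L s T hT v η hv hη ℓ hℓmem hℓ
end
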